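/- arXiv:1407.7279 — 5 statements merged into one kernel-verified Lean document; each statement's English description precedes it below -/
import Mathlib

section
/- Let 𝒢 be a TVG and s a vertex such that a covering journey from s at time 0 exists and the minimal arrival time among covering journeys is attained. Then there exists an optimal solution J with the following property: for every vertex v having degree exactly 2 in the subgraph of the underlying graph induced by the edges of the underlying walk of J, the journey J never turns around at v; that is, J never traverses an edge (u,v) into v and then traverses (v,u) as the very next edge of the journey. -/
/-- A time-varying graph (TVG): an underlying simple graph together with a presence
function telling when each (directed rendering of an) edge is available; every edge
takes one time step to cross. -/
structure TVG (V : Type) where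
  G : SimpleGraph V
  avail : V → V → ℕ → Prop

namespace TVG

variable {V : Type}

/-- A step of a journey: traverse the edge from `x.1` to `x.2.1`, starting at time
`x.2.2` and arriving at time `x.2.2 + 1`. -/
abbrev Step (V : Type) := V × V × ℕ

/-- Consecutive steps of a journey: the next step starts where the previous one ended,
at a strictly later time (waiting in between is allowed). -/
def Linked (a b : Step V) : Prop := b.1 = a.2.1 ∧ a.2.2 + 1 ≤ b.2.2

/-- A journey: each step crosses an edge of the underlying graph that is available at
that time, and consecutive steps are linked. -/
def IsJourney (𝒢 : TVG V) (J : List (Step V)) : Prop :=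
  (∀ x ∈ J, 𝒢.G.Adj x.1 x.2.1 ∧ 𝒢.avail x.1 x.2.1 x.2.2) ∧ J.Chain' Linked

/-- The journey starts at vertex `u`. -/
def startsAt (J : List (Step V)) (u : V) : Prop := ∀ x ∈ J.head?, x.1 = u

/-- The journey departs at or after time `t`. -/
def departsAfter (J : List (Step V)) (t : ℕ) : Prop := ∀ x ∈ J.head?, t ≤ x.2.2

/-- Departure date of a journey started at time `t0`. -/
def departure (J : List (Step V)) (t0 : ℕ) : ℕ := (J.head?).elim t0 fun x => x.2.2

/-- Arrival date of a journey started at time `t0`. -/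
def arrival (J : List (Step V)) (t0 : ℕ) : ℕ := (J.getLast?).elim t0 fun x => x.2.2 + 1

/-- Final vertex of a journey started at vertex `s`. -/
def endAt (J : List (Step V)) (s : V) : V := (J.getLast?).elim s fun x => x.2.1

/-- The journey, started at `s`, visits (covers) vertex `v`. -/
def visits (J : List (Step V)) (s v : V) : Prop := v = s ∨ ∃ x ∈ J, x.2.1 = v

/-- A covering journey from `s` starting at time `0`: a journey that starts at `s`
and visits every vertex. -/
def IsCoveringFrom (𝒢 : TVG V) (J : List (Step V)) (s : V) : Prop :=
  𝒢.IsJourney J ∧ startsAt J s ∧ ∀ v : V, visits J s v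

/-- Class `R` (recurrent edges): connected underlying graph, lifetime `ℕ`, and every
edge is available at arbitrarily late times. -/
def ClassR (𝒢 : TVG V) : Prop :=
  𝒢.G.Connected ∧ ∀ u v, 𝒢.G.Adj u v → ∀ t, ∃ t', t < t' ∧ 𝒢.avail u v t'

/-- Class `B` (time-bounded recurrent edges): every edge is available at some time in
`[t, t + Δ)` for every `t`. -/
def ClassB (𝒢 : TVG V) (Δ : ℕ) : Prop :=
  𝒢.G.Connected ∧ ∀ u v, 𝒢.G.Adj u v → ∀ t, ∃ t', t ≤ t' ∧ t' < t + Δ ∧ 𝒢.avail u v t'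

/-- Class `P` (periodic edges): the presence function is periodic with period `p`. -/
def ClassP (𝒢 : TVG V) (p : ℕ) : Prop :=
  𝒢.G.Connected ∧ ∀ u v t, 𝒢.avail u v t ↔ 𝒢.avail u v (t + p)

/-- Presence function obtained by running the given (possibly time-dependent) edge
relations for the given durations, one block after another, starting at time `0`;
each block relation receives the local time within its block. -/
def schedAvail : List ((V → V → ℕ → Prop) × ℕ) → V → V → ℕ → Prop
  | [], _, _, _ => False
  | (r, d) :: rest, u, v, t => if t < d then r u v t else schedAvail rest u v (t - d)

end TVG

open TVG

/-- The edge-induced subgraph of a journey in the underlying graph: `u` and `v` are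
adjacent iff some step of the journey traverses the edge between them. -/
def journeyGraph {V : Type} (J : List (TVG.Step V)) : SimpleGraph V :=
  SimpleGraph.fromRel (fun u v => ∃ x ∈ J, x.1 = u ∧ x.2.1 = v)

/-!
Among the optimal covering journeys take one with the fewest steps. Suppose it turns around at
a vertex `v` of degree `2` in its journey graph, crossing `u → v` and at once `v → u`. Cutting
these two steps out leaves a journey from `s` that arrives no later. It still covers everything:
`u` is where the journey stood before the detour, and `v` has a second neighbour `w ≠ u` in the
journey graph, so another step crosses the edge `vw` and the journey reaches `v` there too.
The shorter optimal journey contradicts the choice.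
-/

namespace List

theorem IsChain.rel_of_concat_append_cons {α : Type*} {R : α → α → Prop} {l₁ l₂ : List α}
    {p x : α} (h : (l₁.concat p ++ x :: l₂).IsChain R) : R p x := by
  simp only [concat_eq_append, append_assoc, singleton_append, isChain_append_cons_cons] at h
  exact h.2.1

theorem IsChain.head?_eq_or_exists_rel {α : Type*} {R : α → α → Prop} {l : List α}
    (hl : l.IsChain R) {x : α} (hx : x ∈ l) : l.head? = some x ∨ ∃ p ∈ l, R p x := by
  obtain ⟨l₁, l₂, rfl⟩ := List.append_of_mem hx
  rcases l₁.eq_nil_or_concat with rfl | ⟨l₁, p, rfl⟩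
  · exact Or.inl rfl
  · exact Or.inr ⟨p, by simp, hl.rel_of_concat_append_cons⟩

end List

namespace TVG

variable {V : Type}

theorem visits_iff_of_isChain {J : List (Step V)} {s v : V} (hJ : J.IsChain Linked)
    (hs : startsAt J s) : visits J s v ↔ v = s ∨ ∃ x ∈ J, x.1 = v ∨ x.2.1 = v := by
  refine ⟨fun h => h.imp_right fun ⟨x, hx, hxv⟩ => ⟨x, hx, Or.inr hxv⟩, ?_⟩
  rintro (rfl | ⟨x, hx, rfl | hxv⟩)
  · exact Or.inl rfl
  · rcases hJ.head?_eq_or_exists_rel hx with hhead | ⟨p, hp, hpx⟩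
    · exact Or.inl (hs x hhead)
    · exact Or.inr ⟨p, hp, hpx.1.symm⟩
  · exact Or.inr ⟨x, hx, hxv⟩

theorem arrival_append_singleton (l : List (Step V)) (x : Step V) (t₀ : ℕ) :
    arrival (l ++ [x]) t₀ = x.2.2 + 1 := by
  simp [arrival]

section EraseTurn

variable {l₁ l₂ : List (Step V)} {a b : Step V}

theorem isChain_linked_erase_turn (h : (l₁ ++ a :: b :: l₂).IsChain Linked)
    (hturn : b.2.1 = a.1) : (l₁ ++ l₂).IsChain Linked := by
  rw [List.isChain_append] at h ⊢
  obtain ⟨h₁, h₂, hlink⟩ := h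
  obtain ⟨hab, hbl₂⟩ := List.isChain_cons_cons.1 h₂
  refine ⟨h₁, hbl₂.tail, fun x hx y hy => ?_⟩
  have hxa : Linked x a := hlink x hx a rfl
  have hby : Linked b y := hbl₂.rel_head? hy
  exact ⟨by rw [hby.1, hturn, hxa.1], by linarith [hxa.2, hab.2, hby.2]⟩

theorem IsJourney.erase_turn {𝒢 : TVG V} (hJ : 𝒢.IsJourney (l₁ ++ a :: b :: l₂))
    (hturn : b.2.1 = a.1) : 𝒢.IsJourney (l₁ ++ l₂) :=
  ⟨fun x hx => hJ.1 x (by simp only [List.mem_append, List.mem_cons] at hx ⊢; tauto),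
    isChain_linked_erase_turn hJ.2 hturn⟩

theorem startsAt_erase_turn {s : V} (h : (l₁ ++ a :: b :: l₂).IsChain Linked)
    (hs : startsAt (l₁ ++ a :: b :: l₂) s) (hturn : b.2.1 = a.1) : startsAt (l₁ ++ l₂) s := by
  rcases l₁ with _ | ⟨c, l₁⟩
  · intro y hy
    rw [(List.isChain_cons_cons.1 h).2.rel_head? hy |>.1, hturn]
    exact hs a rfl
  · exact hs

theorem arrival_erase_turn_le {t₀ : ℕ} (h : (l₁ ++ a :: b :: l₂).IsChain Linked)
    (ht : departsAfter (l₁ ++ a :: b :: l₂) t₀) :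
    arrival (l₁ ++ l₂) t₀ ≤ arrival (l₁ ++ a :: b :: l₂) t₀ := by
  rcases l₂.eq_nil_or_concat with rfl | ⟨l₂, c, rfl⟩
  · have hab : Linked a b := (List.isChain_append_cons_cons.1 h).2.1
    rw [List.append_nil, show l₁ ++ [a, b] = (l₁ ++ [a]) ++ [b] by simp, arrival_append_singleton]
    rcases l₁.eq_nil_or_concat with rfl | ⟨l₁, p, rfl⟩
    · show t₀ ≤ b.2.2 + 1
      linarith [ht a rfl, hab.2]
    · have hpa : Linked p a := h.rel_of_concat_append_cons
      rw [List.concat_eq_append, arrival_append_singleton]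
      linarith [hpa.2, hab.2]
  · rw [List.concat_eq_append, ← List.append_assoc,
      show l₁ ++ a :: b :: (l₂ ++ [c]) = l₁ ++ a :: b :: l₂ ++ [c] by simp,
      arrival_append_singleton, arrival_append_singleton]

end EraseTurn

end TVG

theorem journeyGraph_adj_iff {V : Type} {J : List (Step V)} {u v : V} :
    (journeyGraph J).Adj u v ↔
      u ≠ v ∧ ∃ x ∈ J, x.1 = u ∧ x.2.1 = v ∨ x.1 = v ∧ x.2.1 = u := by
  rw [journeyGraph, SimpleGraph.fromRel_adj]
  grind

theorem TVG.IsCoveringFrom.erase_turn {V : Type} {𝒢 : TVG V} {s w : V}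
    {l₁ l₂ : List (Step V)} {a b : Step V} (hJ : 𝒢.IsCoveringFrom (l₁ ++ a :: b :: l₂) s)
    (hturn : b.2.1 = a.1) (hw : (journeyGraph (l₁ ++ a :: b :: l₂)).Adj a.2.1 w)
    (hwa : w ≠ a.1) : 𝒢.IsCoveringFrom (l₁ ++ l₂) s := by
  obtain ⟨hjourney, hs, hcover⟩ := hJ
  have hchain : (l₁ ++ a :: b :: l₂).IsChain Linked := hjourney.2
  have hjourney' := hjourney.erase_turn hturn
  have hs' := startsAt_erase_turn hchain hs hturn
  have hab : Linked a b := (List.isChain_append_cons_cons.1 hchain).2.1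
  have hu : visits (l₁ ++ l₂) s a.1 := by
    rcases l₁.eq_nil_or_concat with rfl | ⟨l₁, p, rfl⟩
    · exact Or.inl (hs a rfl)
    · exact Or.inr ⟨p, by simp, (hchain.rel_of_concat_append_cons : Linked p a).1.symm⟩
  have hv : visits (l₁ ++ l₂) s a.2.1 := by
    obtain ⟨hne, x, hx, hxw⟩ : a.2.1 ≠ w ∧ ∃ x ∈ l₁ ++ a :: b :: l₂,
        x.1 = a.2.1 ∧ x.2.1 = w ∨ x.1 = w ∧ x.2.1 = a.2.1 := journeyGraph_adj_iff.1 hw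
    -- the removed steps `a` and `b` both join `a.1` and `a.2.1`, and `w ≠ a.1`
    have hx' : x ∈ l₁ ++ l₂ := by
      simp only [List.mem_append, List.mem_cons] at hx ⊢
      rcases hx with hx | rfl | rfl | hx
      · exact Or.inl hx
      · grind
      · have := hab.1
        grind
      · exact Or.inr hx
    exact (visits_iff_of_isChain hjourney'.2 hs').2 (Or.inr ⟨x, hx', by tauto⟩)
  refine ⟨hjourney', hs', fun v => ?_⟩
  rcases hcover v with rfl | ⟨x, hx, rfl⟩
  · exact Or.inl rfl
  · simp only [List.mem_append, List.mem_cons] at hx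
    rcases hx with hx | rfl | rfl | hx
    · exact Or.inr ⟨x, by simp [hx], rfl⟩
    · exact hv
    · rwa [hturn]
    · exact Or.inr ⟨x, by simp [hx], rfl⟩

/-- Turning around lemma.  If a covering journey from `s` at time `0`
exists (so the minimal arrival time is attained), then there is an optimal solution `J`
that never turns around at any vertex `v` of degree exactly `2` in the edge-induced
subgraph of `J`: it never traverses an edge `(u,v)` into `v` and then immediately
traverses `(v,u)` as the very next edge. -/
theorem turning_around_lemma {V : Type} (𝒢 : TVG V) (s : V)
    (hex : ∃ J, 𝒢.IsCoveringFrom J s) :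
    ∃ J, 𝒢.IsCoveringFrom J s ∧
      (∀ J', 𝒢.IsCoveringFrom J' s → arrival J 0 ≤ arrival J' 0) ∧
      ∀ v : V, {w | (journeyGraph J).Adj v w}.ncard = 2 →
        J.Chain' (fun a b => ¬(a.2.1 = v ∧ b.2.1 = a.1)) := by
  obtain ⟨J, hJ, hmin⟩ : ∃ J, 𝒢.IsCoveringFrom J s ∧ ∀ J', 𝒢.IsCoveringFrom J' s →
      toLex (arrival J 0, J.length) ≤ toLex (arrival J' 0, J'.length) := by
    obtain ⟨J₀, hJ₀⟩ := hex
    exact ⟨_, Function.argminOn_mem _ {J | 𝒢.IsCoveringFrom J s} ⟨J₀, hJ₀⟩,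
      fun J' hJ' => Function.argminOn_le (fun J => toLex (arrival J 0, J.length)) _ hJ'⟩
  refine ⟨J, hJ, fun J' hJ' => (Prod.Lex.toLex_le_toLex'.1 (hmin J' hJ')).1, fun v hdeg => ?_⟩
  rw [List.Chain', List.isChain_iff_forall_rel_of_append_cons_cons]
  rintro a b l₁ l₂ rfl ⟨rfl, hturn⟩
  obtain ⟨w, hw, hwa⟩ := Set.exists_ne_of_one_lt_ncard (hdeg ▸ one_lt_two) a.1
  obtain ⟨harrival, hlength⟩ :=
    Prod.Lex.toLex_le_toLex'.1 (hmin _ (hJ.erase_turn hturn hw hwa))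
  have hlength_le :=
    hlength (harrival.antisymm (arrival_erase_turn_le hJ.1.2 fun _ _ => Nat.zero_le _))
  simp only [List.length_append, List.length_cons] at hlength_le
  omega
end

section
/- Let U = {1,…,m}, let S = {s_1,…,s_n} be a family of subsets of U, and let k be a positive integer. Construct the star G with center c and leaves v_1,…,v_m, p_1,…,p_n, p_0, and the static graphs on this vertex set: pass(i) with the single edge (c,p_i); take(i) with edge set {(c,v_j) : j ∈ s_i}; check with the single edge (c,p_0); and finish with edge set {(c,p_i) : 1 ≤ i ≤ n}. Let 𝒢 be the TVG (pass(1),1),(take(1),2|s_1|),(pass(1),1),(pass(2),1),(take(2),2|s_2|),(pass(2),1),…,(pass(n),1),(take(n),2|s_n|),(pass(n),1),(check,2),(finish,2k−1), of total duration D = 2n + 2·Σ_{i=1}^n |s_i| + 2k + 1. Then there exists a journey starting at c at time 0 that visits every vertex of G and arrives by time D if and only if S contains a subfamily of at most k sets whose union is U. -/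
open TVG

namespace Stmt3

/-- Vertices of the star: the center `c`, element points `v_1,…,v_m`, and set/check
points `p_0,p_1,…,p_n`. -/
abbrev SV (m n : ℕ) := Unit ⊕ Fin m ⊕ Fin (n + 1)

variable {m n : ℕ}

def ctr : SV m n := Sum.inl ()
def elt (j : Fin m) : SV m n := Sum.inr (Sum.inl j)
def pt (i : Fin (n + 1)) : SV m n := Sum.inr (Sum.inr i)

/-- The underlying star: the center is adjacent to every other vertex. -/
def starG (m n : ℕ) : SimpleGraph (SV m n) :=
  SimpleGraph.fromRel (fun u _ => u = ctr)

/-- Symmetrize a relation and make it time-independent. -/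
def sym (r : SV m n → SV m n → Prop) : SV m n → SV m n → ℕ → Prop :=
  fun u v _ => r u v ∨ r v u

/-- `pass(i)`: only the edge `(c, p_i)` (for the set `s_i`, i.e. index `i.succ`). -/
def passR (i : Fin n) : SV m n → SV m n → ℕ → Prop :=
  sym fun u v => u = ctr ∧ v = pt i.succ

/-- `take(i)`: the edges `(c, v_j)` for `j ∈ s_i`. -/
def takeR (s : Finset (Fin m)) : SV m n → SV m n → ℕ → Prop :=
  sym fun u v => u = ctr ∧ ∃ j ∈ s, v = elt j

/-- `check`: only the edge `(c, p_0)`. -/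
def checkR : SV m n → SV m n → ℕ → Prop :=
  sym fun u v => u = ctr ∧ v = pt 0

/-- `finish`: the edges `(c, p_i)` for `1 ≤ i ≤ n`. -/
def finishR : SV m n → SV m n → ℕ → Prop :=
  sym fun u v => u = ctr ∧ ∃ i : Fin n, v = pt i.succ

/-- The schedule `(pass(1),1),(take(1),2|s_1|),(pass(1),1),…,(check,2),(finish,2k-1)`. -/
def blocks (S : Fin n → Finset (Fin m)) (k : ℕ) :
    List ((SV m n → SV m n → ℕ → Prop) × ℕ) :=
  ((List.finRange n).flatMap fun i =>
    [(passR i, 1), (takeR (S i), 2 * (S i).card), (passR i, 1)])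
  ++ [(checkR, 2), (finishR, 2 * k - 1)]

/-- The TVG of the reduction. -/
def 𝒢 (S : Fin n → Finset (Fin m)) (k : ℕ) : TVG (SV m n) :=
  ⟨starG m n, schedAvail (blocks S k)⟩

end Stmt3

/-!
The journey lives on a star, so it is a sequence of excursions from the center `c`, and it can
leave a leaf only through the spoke of that leaf.

Given a cover `I`, during the gadget of a chosen set visit its elements one after the other, and
for any other set `s_i` visit `p_i`, entering at the first and leaving at the second `pass(i)`
step; then visit `p_0` during `check` and the `p_i` of the chosen sets during `finish`, one every
two steps. The `2k - 1` steps of `finish` suffice because the last excursion need not return.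

Conversely, if the journey uses an edge of `take(i)`, it cannot visit `p_i` during the gadget of
`s_i`: entering at the first `pass(i)` step it would be stuck at `p_i` during `take(i)`, entering
at the second it would be stuck there during `check`. So it visits `p_i` during `finish`, where
consecutive departures from `c` are two steps apart (the journey has to come back in between),
which leaves room for at most `k` of them. The sets whose `p_i` are visited then form a cover.
-/

theorem card_le_of_pairwise_add_two_le {s : Finset ℕ} {a k : ℕ}
    (hs : ∀ x ∈ s, a ≤ x ∧ x < a + 2 * k) (hgap : ∀ x ∈ s, ∀ y ∈ s, x < y → x + 2 ≤ y) :
    s.card ≤ k := by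
  calc s.card ≤ (Finset.range k).card := by
        refine Finset.card_le_card_of_injOn (fun x => (x - a) / 2) (fun x hx => ?_)
          fun x hx y hy hxy => ?_
        · have := hs x hx
          simp only [Finset.coe_range, Set.mem_Iio]
          omega
        · have := hs x hx
          have := hs y hy
          simp only at hxy
          rcases lt_trichotomy x y with h | h | h
          · have := hgap x hx y hy h; omega
          · exact h
          · have := hgap y hy x hx h; omega
    _ = k := Finset.card_range k

namespace TVG

variable {V : Type}

section Schedule

def duration (L : List ((V → V → ℕ → Prop) × ℕ)) : ℕ := (L.map Prod.snd).sum

variable {L₁ L₂ : List ((V → V → ℕ → Prop) × ℕ)} {u v : V} {t : ℕ}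

theorem duration_flatMap {α : Type} (l : List α) (g : α → List ((V → V → ℕ → Prop) × ℕ)) :
    duration (l.flatMap g) = (l.map fun a => duration (g a)).sum := by
  induction l with
  | nil => rfl
  | cons a l ih =>
    simp only [duration, List.flatMap_cons, List.map_append, List.sum_append, List.map_cons,
      List.sum_cons] at ih ⊢
    rw [ih]

theorem schedAvail_append_of_lt (ht : t < duration L₁) :
    schedAvail (L₁ ++ L₂) u v t ↔ schedAvail L₁ u v t := by
  induction L₁ generalizing t with
  | nil => simp [duration] at ht
  | cons e L ih =>
    obtain ⟨r, d⟩ := e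
    simp only [duration, List.map_cons, List.sum_cons] at ht
    simp only [List.cons_append, schedAvail]
    split_ifs
    · rfl
    · exact ih (by unfold duration; omega)

theorem schedAvail_append_of_le (ht : duration L₁ ≤ t) :
    schedAvail (L₁ ++ L₂) u v t ↔ schedAvail L₂ u v (t - duration L₁) := by
  induction L₁ generalizing t with
  | nil => simp [duration]
  | cons e L ih =>
    obtain ⟨r, d⟩ := e
    simp only [duration, List.map_cons, List.sum_cons] at ht ⊢
    simp only [List.cons_append, schedAvail, if_neg (show ¬t < d by omega)]
    rw [ih (by unfold duration; omega), Nat.sub_sub]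
    rfl

theorem schedAvail_comm {L : List ((V → V → ℕ → Prop) × ℕ)}
    (hL : ∀ e ∈ L, ∀ u v t, e.1 u v t ↔ e.1 v u t) :
    schedAvail L u v t ↔ schedAvail L v u t := by
  induction L generalizing t with
  | nil => rfl
  | cons e L ih =>
    obtain ⟨r, d⟩ := e
    simp only [schedAvail]
    split_ifs
    · exact hL _ List.mem_cons_self u v t
    · exact ih fun e he => hL e (List.mem_cons_of_mem _ he)

end Schedule

section Journeys

variable {J : List (Step V)} {x y : Step V}

theorem pairwise_time_lt (hJ : J.IsChain Linked) : J.Pairwise fun x y => x.2.2 < y.2.2 := by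
  have : (J.map fun x => x.2.2).IsChain (· < ·) :=
    (List.isChain_map _).2 (hJ.imp fun _ _ h => Nat.lt_of_succ_le h.2)
  exact List.pairwise_map.1 (List.isChain_iff_pairwise.1 this)

theorem eq_of_time_eq (hJ : J.IsChain Linked) (hx : x ∈ J) (hy : y ∈ J) (h : x.2.2 = y.2.2) :
    x = y := by
  have hnodup : (J.map fun x => x.2.2).Nodup :=
    (List.pairwise_map.2 (pairwise_time_lt hJ)).imp ne_of_lt
  exact List.inj_on_of_nodup_map hnodup hx hy h

theorem exists_next_step (hJ : J.IsChain Linked) (hx : x ∈ J) (hy : y ∈ J)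
    (hxy : x.2.2 < y.2.2) : ∃ z ∈ J, z.1 = x.2.1 ∧ x.2.2 < z.2.2 ∧ z.2.2 ≤ y.2.2 := by
  have hlt := List.pairwise_iff_getElem.1 (pairwise_time_lt hJ)
  obtain ⟨a, ha, rfl⟩ := List.mem_iff_getElem.1 hx
  obtain ⟨b, hb, rfl⟩ := List.mem_iff_getElem.1 hy
  have hab : a < b := by
    by_contra! hba
    rcases hba.lt_or_eq with hba | rfl
    · exact absurd (hlt b a hb ha hba) (by omega)
    · omega
  have hlink : Linked J[a] J[a + 1] := List.isChain_iff_getElem.1 hJ a (by omega)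
  refine ⟨J[a + 1], List.getElem_mem _, hlink.1, by have := hlink.2; omega, ?_⟩
  rcases (Nat.succ_le_of_lt hab).lt_or_eq with h | h
  · exact (hlt _ _ _ hb h).le
  · subst h; exact le_rfl

theorem source_eq_of_time_succ (hJ : J.IsChain Linked) (hx : x ∈ J) (hy : y ∈ J)
    (h : y.2.2 = x.2.2 + 1) : y.1 = x.2.1 := by
  obtain ⟨z, hz, hzx, hxz, hzy⟩ := exists_next_step hJ hx hy (by omega)
  rw [← eq_of_time_eq hJ hz hy (by omega), hzx]

theorem card_departures_le (hJ : J.IsChain Linked) {c : V} {F : Finset (Step V)} {a k : ℕ}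
    (hF : ∀ x ∈ F, x ∈ J ∧ x.1 = c ∧ x.2.1 ≠ c ∧ a ≤ x.2.2 ∧ x.2.2 < a + 2 * k) :
    F.card ≤ k := by
  rw [← Finset.card_image_of_injOn fun x hx y hy h => eq_of_time_eq hJ (hF x hx).1 (hF y hy).1 h]
  refine card_le_of_pairwise_add_two_le (a := a) (fun t ht => ?_) fun t ht t' ht' htt' => ?_
  · obtain ⟨x, hx, rfl⟩ := Finset.mem_image.1 ht
    exact (hF x hx).2.2.2
  · obtain ⟨x, hx, rfl⟩ := Finset.mem_image.1 ht
    obtain ⟨y, hy, rfl⟩ := Finset.mem_image.1 ht'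
    obtain ⟨hxJ, -, hxc, -⟩ := hF x hx
    obtain ⟨hyJ, hyc, -⟩ := hF y hy
    by_contra! h
    exact hxc (hyc ▸ source_eq_of_time_succ hJ hxJ hyJ (by omega)).symm

end Journeys

section RoundTrips

/-- For each `(v, s, s')` in `p`: go from `c` to `v` at time `s`, come back at time `s'`. -/
def roundTrips (c : V) (p : List (V × ℕ × ℕ)) : List (Step V) :=
  p.flatMap fun q => [(c, q.1, q.2.1), (q.1, c, q.2.2)]

variable {c : V} {p : List (V × ℕ × ℕ)}

theorem head?_roundTrips : (roundTrips c p).head? = p.head?.map fun q => (c, q.1, q.2.1) := by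
  cases p <;> rfl

theorem mem_roundTrips {x : Step V} :
    x ∈ roundTrips c p ↔ ∃ q ∈ p, x = (c, q.1, q.2.1) ∨ x = (q.1, c, q.2.2) := by
  simp [roundTrips, or_comm]

theorem dropLast_roundTrips_concat (q : V × ℕ × ℕ) :
    (roundTrips c (p ++ [q])).dropLast = roundTrips c p ++ [(c, q.1, q.2.1)] := by
  simp [roundTrips, List.dropLast_append_of_ne_nil]

theorem startsAt_dropLast_roundTrips : startsAt (roundTrips c p).dropLast c := by
  intro x hx
  rw [List.head?_dropLast] at hx
  split_ifs at hx
  · rw [head?_roundTrips] at hx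
    obtain ⟨q, -, rfl⟩ := Option.mem_map.1 hx
    rfl
  · cases hx

theorem mem_dropLast_roundTrips {q : V × ℕ × ℕ} (hq : q ∈ p) :
    (c, q.1, q.2.1) ∈ (roundTrips c p).dropLast := by
  obtain rfl | ⟨p, l, rfl⟩ := List.eq_nil_or_concat p
  · cases hq
  rw [List.concat_eq_append] at hq ⊢
  rw [dropLast_roundTrips_concat]
  rcases List.mem_append.1 hq with hq | hq
  · exact List.mem_append_left _ (mem_roundTrips.2 ⟨q, hq, Or.inl rfl⟩)
  · rw [List.mem_singleton.1 hq]
    exact List.mem_append_right _ (List.mem_singleton_self _)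

theorem isChain_roundTrips (hord : ∀ q ∈ p, q.2.1 < q.2.2)
    (hpw : p.Pairwise fun q q' => q.2.2 < q'.2.1) : (roundTrips c p).IsChain Linked := by
  induction p with
  | nil => exact List.IsChain.nil
  | cons q p ih =>
    rw [List.pairwise_cons] at hpw
    change ((c, q.1, q.2.1) :: (q.1, c, q.2.2) :: roundTrips c p).IsChain Linked
    rw [List.isChain_cons_cons, List.isChain_cons, head?_roundTrips]
    refine ⟨⟨rfl, hord q List.mem_cons_self⟩, ?_,
      ih (fun q' hq' => hord q' (List.mem_cons_of_mem _ hq')) hpw.2⟩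
    intro y hy
    obtain ⟨q', hq', rfl⟩ := Option.mem_map.1 hy
    exact ⟨rfl, hpw.1 q' (List.mem_of_mem_head? hq')⟩

/-- Only the last excursion may fail to come back before `T`: the journey drops that return. -/
theorem exists_isCoveringFrom_of_roundTrips (𝒢 : TVG V) {T : ℕ}
    (hpw : p.Pairwise fun q q' => q.2.2 < q'.2.1)
    (hout : ∀ q ∈ p, 𝒢.G.Adj c q.1 ∧ q.2.1 < q.2.2 ∧ q.2.1 < T ∧ 𝒢.avail c q.1 q.2.1)
    (hback : ∀ q ∈ p, q.2.2 < T → 𝒢.avail q.1 c q.2.2)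
    (hvis : ∀ v, v ≠ c → ∃ q ∈ p, q.1 = v) :
    ∃ J, 𝒢.IsCoveringFrom J c ∧ arrival J 0 ≤ T := by
  have hvisits (J : List (Step V)) (hJ : ∀ q ∈ p, (c, q.1, q.2.1) ∈ J) (v : V) : visits J c v :=
    (eq_or_ne v c).imp id fun hv =>
      let ⟨q, hq, hqv⟩ := hvis v hv
      ⟨_, hJ q hq, hqv⟩
  obtain rfl | ⟨p, l, rfl⟩ := List.eq_nil_or_concat p
  · exact ⟨[], ⟨⟨by simp, List.IsChain.nil⟩, by simp [startsAt], hvisits [] (by simp)⟩,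
      Nat.zero_le _⟩
  simp only [List.concat_eq_append] at *
  have hchain := isChain_roundTrips (c := c) (fun q hq => (hout q hq).2.1) hpw
  have hl : l ∈ p ++ [l] := List.mem_append_right _ (List.mem_singleton_self _)
  refine ⟨_, ⟨⟨fun x hx => ?_, hchain.prefix (List.dropLast_prefix _)⟩,
    startsAt_dropLast_roundTrips, hvisits _ fun q hq => mem_dropLast_roundTrips hq⟩, ?_⟩
  · rw [dropLast_roundTrips_concat, List.mem_append, List.mem_singleton, mem_roundTrips] at hx
    rcases hx with ⟨q, hq, rfl | rfl⟩ | rfl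
    · exact ⟨(hout q (List.mem_append_left _ hq)).1, (hout q (List.mem_append_left _ hq)).2.2.2⟩
    · have := (List.pairwise_append.1 hpw).2.2 q hq l (List.mem_singleton_self _)
      have := (hout l hl).2.2.1
      exact ⟨(hout q (List.mem_append_left _ hq)).1.symm,
        hback q (List.mem_append_left _ hq) (by omega)⟩
    · exact ⟨(hout l hl).1, (hout l hl).2.2.2⟩
  · simp only [arrival, dropLast_roundTrips_concat, List.getLast?_concat, Option.elim]
    exact (hout l hl).2.2.1

end RoundTrips

section Shuttle

variable {α : Type} {f : α → V}

def shuttle (f : α → V) : List α → ℕ → List (V × ℕ × ℕ)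
  | [], _ => []
  | a :: l, t => (f a, t, t + 1) :: shuttle f l (t + 2)

theorem exists_of_mem_shuttle {l : List α} {t : ℕ} {q : V × ℕ × ℕ} (hq : q ∈ shuttle f l t) :
    ∃ a ∈ l, q.1 = f a ∧ q.2.2 = q.2.1 + 1 ∧ t ≤ q.2.1 ∧ q.2.1 + 2 ≤ t + 2 * l.length := by
  induction l generalizing t with
  | nil => cases hq
  | cons a l ih =>
    rcases List.mem_cons.1 hq with rfl | hq
    · exact ⟨a, List.mem_cons_self, rfl, rfl, le_rfl, by simp only [List.length_cons]; omega⟩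
    · obtain ⟨b, hb, h₁, h₂, h₃, h₄⟩ := ih hq
      exact ⟨b, List.mem_cons_of_mem _ hb, h₁, h₂, by omega,
        by simp only [List.length_cons]; omega⟩

theorem pairwise_shuttle (l : List α) (t : ℕ) :
    (shuttle f l t).Pairwise fun q q' => q.2.2 < q'.2.1 := by
  induction l generalizing t with
  | nil => exact List.Pairwise.nil
  | cons a l ih =>
    refine List.Pairwise.cons (fun q hq => ?_) (ih _)
    obtain ⟨-, -, -, -, h, -⟩ := exists_of_mem_shuttle hq
    dsimp only
    omega

theorem exists_mem_shuttle {l : List α} {a : α} (ha : a ∈ l) (t : ℕ) :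
    ∃ q ∈ shuttle f l t, q.1 = f a := by
  induction l generalizing t with
  | nil => cases ha
  | cons b l ih =>
    rcases List.mem_cons.1 ha with rfl | ha
    · exact ⟨_, List.mem_cons_self, rfl⟩
    · obtain ⟨q, hq, h⟩ := ih ha (t + 2)
      exact ⟨q, List.mem_cons_of_mem _ hq, h⟩

end Shuttle

end TVG

namespace Stmt3

variable {m n k : ℕ}

section Star

@[simp] theorem elt_ne_ctr (j : Fin m) : (elt j : SV m n) ≠ ctr := by simp [elt, ctr]
@[simp] theorem pt_ne_ctr (i : Fin (n + 1)) : (pt i : SV m n) ≠ ctr := by simp [pt, ctr]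
@[simp] theorem elt_ne_pt (j : Fin m) (i : Fin (n + 1)) : (elt j : SV m n) ≠ pt i := by
  simp [elt, pt]
@[simp] theorem pt_ne_elt (j : Fin m) (i : Fin (n + 1)) : (pt i : SV m n) ≠ elt j := by
  simp [elt, pt]
@[simp] theorem elt_inj {j j' : Fin m} : (elt j : SV m n) = elt j' ↔ j = j' := by simp [elt]
@[simp] theorem pt_inj {i i' : Fin (n + 1)} : (pt i : SV m n) = pt i' ↔ i = i' := by simp [pt]

theorem eq_ctr_or_elt_or_pt (v : SV m n) :
    v = ctr ∨ (∃ j, v = elt j) ∨ v = pt 0 ∨ ∃ i : Fin n, v = pt i.succ := by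
  rcases v with ⟨⟩ | j | i
  · exact Or.inl rfl
  · exact Or.inr (Or.inl ⟨j, rfl⟩)
  · induction i using Fin.cases with
    | zero => exact Or.inr (Or.inr (Or.inl rfl))
    | succ i => exact Or.inr (Or.inr (Or.inr ⟨i, rfl⟩))

theorem starG_adj {u v : SV m n} : (starG m n).Adj u v ↔ u ≠ v ∧ (u = ctr ∨ v = ctr) := by
  simp [starG]

end Star

section Timetable

variable (S : Fin n → Finset (Fin m))

def gadget (i : Fin n) : List ((SV m n → SV m n → ℕ → Prop) × ℕ) :=
  [(passR i, 1), (takeR (S i), 2 * (S i).card), (passR i, 1)]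

theorem duration_gadget (i : Fin n) : duration (gadget S i) = 2 + 2 * (S i).card := by
  simp [duration, gadget]
  omega

/-- Start time of the gadget of `S a` for `a < n`, and of the `check` block for `a = n`. -/
def start (a : ℕ) : ℕ := (((List.finRange n).map fun i => 2 + 2 * (S i).card).take a).sum

theorem start_mono : Monotone (start S) := List.monotone_sum_take _

theorem start_succ (i : Fin n) : start S (i + 1) = start S i + (2 + 2 * (S i).card) := by
  rw [start, List.sum_take_succ _ _ (by simp)]
  simp [start]

theorem start_succ_le (i : Fin n) : start S i + (2 + 2 * (S i).card) ≤ start S n :=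
  start_succ S i ▸ start_mono S i.isLt

theorem start_last : start S n = 2 * n + 2 * ∑ i, (S i).card := by
  rw [start, List.take_of_length_le (by simp), ← Fin.sum_univ_def, Finset.sum_add_distrib,
    Finset.mul_sum]
  simp [mul_comm]

theorem exists_start_le_lt {t : ℕ} (ht : t < start S n) :
    ∃ i : Fin n, start S i ≤ t ∧ t < start S (i + 1) := by
  suffices ∀ a ≤ n, t < start S a → ∃ i : Fin n, start S i ≤ t ∧ t < start S (i + 1) from
    this n le_rfl ht
  intro a
  induction a with
  | zero => simp [start]
  | succ a ih =>
    intro ha h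
    by_cases h' : t < start S a
    · exact ih (by omega) h'
    · exact ⟨⟨a, ha⟩, not_lt.1 h', h⟩

theorem duration_take_flatMap_gadget (a : ℕ) :
    duration (((List.finRange n).take a).flatMap (gadget S)) = start S a := by
  rw [duration_flatMap, start, ← List.map_take]
  congr 2
  exact funext (duration_gadget S)

theorem duration_flatMap_gadget :
    duration ((List.finRange n).flatMap (gadget S)) = start S n := by
  simpa [List.take_of_length_le] using duration_take_flatMap_gadget S n

theorem blocks_eq :
    blocks S k = (List.finRange n).flatMap (gadget S) ++ [(checkR, 2), (finishR, 2 * k - 1)] :=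
  rfl

theorem blocks_eq_take_append (i : Fin n) :
    blocks S k = ((List.finRange n).take i).flatMap (gadget S) ++
      (gadget S i ++ (((List.finRange n).drop (i + 1)).flatMap (gadget S) ++
        [(checkR, 2), (finishR, 2 * k - 1)])) := by
  rw [blocks_eq, ← List.append_assoc, ← List.append_assoc]
  congr 1
  conv_lhs => rw [← List.take_append_drop i (List.finRange n),
    List.drop_eq_getElem_cons (by simp)]
  simp only [List.flatMap_append, List.flatMap_cons, List.getElem_finRange, Fin.cast_mk, Fin.eta,
    List.append_assoc]

theorem avail_iff_during_gadget (i : Fin n) {u v : SV m n} {t : ℕ} (h₁ : start S i ≤ t)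
    (h₂ : t < start S (i + 1)) :
    (𝒢 S k).avail u v t ↔
      ((t = start S i ∨ t = start S i + 2 * (S i).card + 1) ∧ passR i u v t) ∨
      ((start S i < t ∧ t ≤ start S i + 2 * (S i).card) ∧ takeR (S i) u v t) := by
  rw [start_succ] at h₂
  change schedAvail _ u v t ↔ _
  rw [blocks_eq_take_append S i, schedAvail_append_of_le (by rwa [duration_take_flatMap_gadget]),
    schedAvail_append_of_lt (by rw [duration_take_flatMap_gadget, duration_gadget]; omega),
    duration_take_flatMap_gadget]
  simp only [gadget, schedAvail, passR, takeR, sym]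
  split_ifs <;> grind

theorem avail_iff_after_gadgets {u v : SV m n} {t : ℕ} (h : start S n ≤ t) :
    (𝒢 S k).avail u v t ↔
      ((t = start S n ∨ t = start S n + 1) ∧ checkR u v t) ∨
      ((start S n + 2 ≤ t ∧ t ≤ start S n + 2 * k) ∧ finishR u v t) := by
  change schedAvail _ u v t ↔ _
  rw [blocks_eq, schedAvail_append_of_le (by rwa [duration_flatMap_gadget]),
    duration_flatMap_gadget]
  simp only [schedAvail, checkR, finishR, sym]
  split_ifs <;> grind

theorem avail_iff {u v : SV m n} {t : ℕ} :
    (𝒢 S k).avail u v t ↔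
      (∃ i : Fin n, (t = start S i ∨ t = start S i + 2 * (S i).card + 1) ∧ passR i u v t) ∨
      (∃ i : Fin n, (start S i < t ∧ t ≤ start S i + 2 * (S i).card) ∧ takeR (S i) u v t) ∨
      ((t = start S n ∨ t = start S n + 1) ∧ checkR u v t) ∨
      ((start S n + 2 ≤ t ∧ t ≤ start S n + 2 * k) ∧ finishR u v t) := by
  constructor
  · intro h
    by_cases ht : t < start S n
    · obtain ⟨i, h₁, h₂⟩ := exists_start_le_lt S ht
      rcases (avail_iff_during_gadget S i h₁ h₂).1 h with h | h
      exacts [Or.inl ⟨i, h⟩, Or.inr (Or.inl ⟨i, h⟩)]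
    · exact Or.inr (Or.inr ((avail_iff_after_gadgets S (not_lt.1 ht)).1 h))
  · rintro (⟨i, hi⟩ | ⟨i, hi⟩ | h | h)
    · have := start_succ S i
      exact (avail_iff_during_gadget S i (by omega) (by omega)).2 (Or.inl hi)
    · have := start_succ S i
      exact (avail_iff_during_gadget S i (by omega) (by omega)).2 (Or.inr hi)
    · exact (avail_iff_after_gadgets S (by omega)).2 (Or.inl h)
    · exact (avail_iff_after_gadgets S (by omega)).2 (Or.inr h)

theorem avail_comm {u v : SV m n} {t : ℕ} : (𝒢 S k).avail u v t ↔ (𝒢 S k).avail v u t := by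
  refine schedAvail_comm fun e he u v t => ?_
  simp only [blocks, List.mem_append, List.mem_flatMap, List.mem_cons, List.mem_nil_iff,
    or_false] at he
  rcases he with ⟨i, -, rfl | rfl | rfl⟩ | rfl | rfl <;> exact or_comm

theorem avail_ctr_elt {j : Fin m} {t : ℕ} :
    (𝒢 S k).avail ctr (elt j) t ↔
      ∃ i, j ∈ S i ∧ start S i < t ∧ t ≤ start S i + 2 * (S i).card := by
  simp [avail_iff, passR, takeR, checkR, finishR, sym]
  exact exists_congr fun _ => and_comm

theorem avail_ctr_pt_zero {t : ℕ} :
    (𝒢 S k).avail ctr (pt 0) t ↔ t = start S n ∨ t = start S n + 1 := by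
  simp [avail_iff, passR, takeR, checkR, finishR, sym, (Fin.succ_ne_zero _).symm]

theorem avail_ctr_pt_succ (i : Fin n) {t : ℕ} :
    (𝒢 S k).avail ctr (pt i.succ) t ↔
      t = start S i ∨ t = start S i + 2 * (S i).card + 1 ∨
        start S n + 2 ≤ t ∧ t ≤ start S n + 2 * k := by
  simp [avail_iff, passR, takeR, checkR, finishR, sym, or_assoc]

end Timetable

section CoveringImpliesCover

variable {S : Fin n → Finset (Fin m)} {J : List (Step (SV m n))}

theorem source_eq_ctr (hJ : (𝒢 S k).IsJourney J) {x : Step (SV m n)} (hx : x ∈ J)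
    (h : x.2.1 ≠ ctr) : x.1 = ctr :=
  (starG_adj.1 (hJ.1 x hx).1).2.resolve_right h

theorem target_eq_ctr (hJ : (𝒢 S k).IsJourney J) {x : Step (SV m n)} (hx : x ∈ J)
    (h : x.1 ≠ ctr) : x.2.1 = ctr :=
  (starG_adj.1 (hJ.1 x hx).1).2.resolve_left h

theorem exists_entry (hJ : (𝒢 S k).IsCoveringFrom J ctr) {v : SV m n} (hv : v ≠ ctr) :
    ∃ x ∈ J, x.1 = ctr ∧ x.2.1 = v ∧ (𝒢 S k).avail ctr v x.2.2 := by
  obtain ⟨x, hx, rfl⟩ := (hJ.2.2 v).resolve_left hv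
  have hxc := source_eq_ctr hJ.1 hx hv
  exact ⟨x, hx, hxc, rfl, hxc ▸ (hJ.1.1 x hx).2⟩

theorem exists_avail_between (hJ : (𝒢 S k).IsJourney J) {v : SV m n} (hv : v ≠ ctr)
    {z y : Step (SV m n)} (hz : z ∈ J) (hzv : z.2.1 = v) (hy : y ∈ J) (hyc : y.1 = ctr)
    (hzy : z.2.2 < y.2.2) : ∃ t, z.2.2 < t ∧ t < y.2.2 ∧ (𝒢 S k).avail ctr v t := by
  obtain ⟨w, hw, hwv, hzw, hwy⟩ := exists_next_step hJ.2 hz hy hzy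
  rw [hzv] at hwv
  have hwy' : w.2.2 ≠ y.2.2 := fun h =>
    hv (hwv ▸ hyc ▸ congrArg Prod.fst (eq_of_time_eq hJ.2 hw hy h))
  have hwc := target_eq_ctr hJ hw (hwv ▸ hv)
  refine ⟨w.2.2, hzw, lt_of_le_of_ne hwy hwy', (avail_comm S).1 ?_⟩
  rw [← hwv, ← hwc]
  exact (hJ.1 w hw).2

theorem exists_finish_entry (hJ : (𝒢 S k).IsCoveringFrom J ctr) (i : Fin n)
    {x : Step (SV m n)} (hx : x ∈ J) (hxc : x.1 = ctr) (h₁ : start S i < x.2.2)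
    (h₂ : x.2.2 ≤ start S i + 2 * (S i).card) :
    ∃ z ∈ J, z.1 = ctr ∧ z.2.1 = pt i.succ ∧ start S n + 2 ≤ z.2.2 ∧
      z.2.2 ≤ start S n + 2 * k := by
  obtain ⟨z, hz, hzc, hzp, hza⟩ := exists_entry hJ (pt_ne_ctr i.succ)
  have := start_succ_le S i
  rcases (avail_ctr_pt_succ S i).1 hza with h | h | h
  · obtain ⟨t, h₃, h₄, ht⟩ := exists_avail_between hJ.1 (pt_ne_ctr _) hz hzp hx hxc (by omega)
    rcases (avail_ctr_pt_succ S i).1 ht with _ | _ | _ <;> omega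
  · obtain ⟨w, hw, hwc, -, hwa⟩ := exists_entry hJ (pt_ne_ctr 0)
    have := (avail_ctr_pt_zero S).1 hwa
    obtain ⟨t, h₃, h₄, ht⟩ := exists_avail_between hJ.1 (pt_ne_ctr _) hz hzp hw hwc (by omega)
    rcases (avail_ctr_pt_succ S i).1 ht with _ | _ | _ <;> omega
  · exact ⟨z, hz, hzc, hzp, h⟩

theorem exists_cover_of_isCoveringFrom (hJ : (𝒢 S k).IsCoveringFrom J ctr) :
    ∃ I : Finset (Fin n), I.card ≤ k ∧ ∀ j : Fin m, ∃ i ∈ I, j ∈ S i := by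
  classical
  let I := Finset.univ.filter fun i : Fin n => ∃ z ∈ J, z.1 = ctr ∧ z.2.1 = pt i.succ ∧
    start S n + 2 ≤ z.2.2 ∧ z.2.2 ≤ start S n + 2 * k
  let F := J.toFinset.filter fun x => x.1 = ctr ∧ x.2.1 ≠ ctr ∧ start S n + 2 ≤ x.2.2 ∧
    x.2.2 < start S n + 2 + 2 * k
  refine ⟨I, ?_, fun j => ?_⟩
  · calc I.card ≤ (F.image fun x => x.2.1).card := by
          refine Finset.card_le_card_of_injOn (fun i => pt i.succ) (fun i hi => ?_)
            fun i _ i' _ h => Fin.succ_injective _ (pt_inj.1 h)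
          obtain ⟨z, hz, hzc, hzp, h₁, h₂⟩ := (Finset.mem_filter.1 hi).2
          exact Finset.mem_image.2 ⟨z, Finset.mem_filter.2 ⟨List.mem_toFinset.2 hz, hzc,
            hzp ▸ pt_ne_ctr _, h₁, by omega⟩, hzp⟩
      _ ≤ F.card := Finset.card_image_le
      _ ≤ k := card_departures_le hJ.1.2 fun x hx =>
          ⟨List.mem_toFinset.1 (Finset.mem_filter.1 hx).1, (Finset.mem_filter.1 hx).2⟩
  · obtain ⟨x, hx, hxc, -, hxa⟩ := exists_entry hJ (elt_ne_ctr j)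
    obtain ⟨i, hji, h₁, h₂⟩ := (avail_ctr_elt S).1 hxa
    exact ⟨i, Finset.mem_filter.2 ⟨Finset.mem_univ _, exists_finish_entry hJ i hx hxc h₁ h₂⟩, hji⟩

end CoveringImpliesCover

section CoverImpliesCovering

variable (S : Fin n → Finset (Fin m)) (I : Finset (Fin n))

noncomputable def gadgetTour (i : Fin n) : List (SV m n × ℕ × ℕ) :=
  if i ∈ I then shuttle elt (S i).toList (start S i + 1)
  else [(pt i.succ, start S i, start S i + 2 * (S i).card + 1)]

noncomputable def coverTour : List (SV m n × ℕ × ℕ) :=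
  (List.finRange n).flatMap (gadgetTour S I) ++
    (pt 0, start S n, start S n + 1) :: shuttle (fun i => pt i.succ) I.toList (start S n + 2)

variable {S I}

theorem of_mem_gadgetTour {i : Fin n} {q : SV m n × ℕ × ℕ} (hq : q ∈ gadgetTour S I i) :
    q.1 ≠ ctr ∧ start S i ≤ q.2.1 ∧ q.2.1 < q.2.2 ∧ q.2.2 ≤ start S i + 2 * (S i).card + 1 ∧
      (𝒢 S k).avail ctr q.1 q.2.1 ∧ (𝒢 S k).avail ctr q.1 q.2.2 := by
  unfold gadgetTour at hq
  split_ifs at hq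
  · obtain ⟨j, hj, hq1, hq2, h₁, h₂⟩ := exists_of_mem_shuttle hq
    rw [Finset.length_toList] at h₂
    rw [Finset.mem_toList] at hj
    rw [hq1, avail_ctr_elt, avail_ctr_elt]
    exact ⟨elt_ne_ctr j, by omega, by omega, by omega, ⟨i, hj, by omega, by omega⟩,
      ⟨i, hj, by omega, by omega⟩⟩
  · rw [List.mem_singleton.1 hq, avail_ctr_pt_succ, avail_ctr_pt_succ]
    exact ⟨pt_ne_ctr _, le_rfl, by dsimp only; omega, le_rfl, Or.inl rfl, Or.inr (Or.inl rfl)⟩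

theorem pairwise_coverTour : (coverTour S I).Pairwise fun q q' => q.2.2 < q'.2.1 := by
  have hgadget {i : Fin n} {q : SV m n × ℕ × ℕ} (hq : q ∈ gadgetTour S I i) :
      start S i ≤ q.2.1 ∧ q.2.2 < start S (i + 1) := by
    have := of_mem_gadgetTour (k := 0) hq
    rw [start_succ]
    omega
  rw [coverTour, List.pairwise_append, List.pairwise_flatMap, List.pairwise_cons]
  refine ⟨⟨fun i _ => ?_, (List.pairwise_lt_finRange n).imp fun hii' q hq q' hq' => ?_⟩,
    ⟨fun q hq => ?_, pairwise_shuttle _ _⟩, fun q hq q' hq' => ?_⟩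
  · unfold gadgetTour
    split_ifs
    exacts [pairwise_shuttle _ _, List.pairwise_singleton _ _]
  · have := start_mono S (show _ + 1 ≤ _ from hii')
    have := hgadget hq
    have := hgadget hq'
    omega
  · obtain ⟨-, -, -, -, h, -⟩ := exists_of_mem_shuttle hq
    dsimp only
    omega
  · obtain ⟨i, -, hq⟩ := List.mem_flatMap.1 hq
    have := start_mono S (show _ + 1 ≤ n from i.isLt)
    have := hgadget hq
    rcases List.mem_cons.1 hq' with rfl | hq'
    · dsimp only
      omega
    · obtain ⟨-, -, -, -, h, -⟩ := exists_of_mem_shuttle hq'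
      omega

theorem of_mem_coverTour (hI : I.card ≤ k) {q : SV m n × ℕ × ℕ} (hq : q ∈ coverTour S I) :
    q.1 ≠ ctr ∧ q.2.1 < q.2.2 ∧ q.2.1 ≤ start S n + 2 * k ∧ (𝒢 S k).avail ctr q.1 q.2.1 ∧
      (q.2.2 ≤ start S n + 2 * k → (𝒢 S k).avail ctr q.1 q.2.2) := by
  rcases List.mem_append.1 hq with hq | hq
  · obtain ⟨i, -, hq⟩ := List.mem_flatMap.1 hq
    obtain ⟨h₁, -, h₂, h₃, h₄, h₅⟩ := of_mem_gadgetTour (k := k) hq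
    have := start_succ_le S i
    exact ⟨h₁, h₂, by omega, h₄, fun _ => h₅⟩
  rcases List.mem_cons.1 hq with rfl | hq
  · rw [avail_ctr_pt_zero, avail_ctr_pt_zero]
    exact ⟨pt_ne_ctr 0, by dsimp only; omega, by dsimp only; omega, Or.inl rfl,
      fun _ => Or.inr rfl⟩
  · obtain ⟨i, -, hq1, hq2, h₁, h₂⟩ := exists_of_mem_shuttle hq
    rw [Finset.length_toList] at h₂
    rw [hq1, avail_ctr_pt_succ, avail_ctr_pt_succ]
    exact ⟨pt_ne_ctr _, by omega, by omega, Or.inr (Or.inr ⟨by omega, by omega⟩),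
      fun h => Or.inr (Or.inr ⟨by omega, h⟩)⟩

theorem coverTour_visits (hcov : ∀ j : Fin m, ∃ i ∈ I, j ∈ S i) (v : SV m n) (hv : v ≠ ctr) :
    ∃ q ∈ coverTour S I, q.1 = v := by
  rcases eq_ctr_or_elt_or_pt v with rfl | ⟨j, rfl⟩ | rfl | ⟨i, rfl⟩
  · exact absurd rfl hv
  · obtain ⟨i, hi, hj⟩ := hcov j
    obtain ⟨q, hq, h⟩ := exists_mem_shuttle (f := elt) (Finset.mem_toList.2 hj) (start S i + 1)
    refine ⟨q, List.mem_append_left _ (List.mem_flatMap.2 ⟨i, List.mem_finRange i, ?_⟩), h⟩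
    rwa [gadgetTour, if_pos hi]
  · exact ⟨_, List.mem_append_right _ List.mem_cons_self, rfl⟩
  · by_cases hi : i ∈ I
    · obtain ⟨q, hq, h⟩ := exists_mem_shuttle (f := fun i : Fin n => (pt i.succ : SV m n))
        (Finset.mem_toList.2 hi) (start S n + 2)
      exact ⟨q, List.mem_append_right _ (List.mem_cons_of_mem _ hq), h⟩
    · refine ⟨(pt i.succ, start S i, start S i + 2 * (S i).card + 1),
        List.mem_append_left _ (List.mem_flatMap.2 ⟨i, List.mem_finRange i, ?_⟩), rfl⟩
      rw [gadgetTour, if_neg hi]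
      exact List.mem_singleton_self _

theorem exists_isCoveringFrom_of_cover (hI : I.card ≤ k)
    (hcov : ∀ j : Fin m, ∃ i ∈ I, j ∈ S i) :
    ∃ J, (𝒢 S k).IsCoveringFrom J ctr ∧ arrival J 0 ≤ start S n + 2 * k + 1 := by
  refine exists_isCoveringFrom_of_roundTrips (𝒢 S k) pairwise_coverTour
    (fun q hq => ?_) (fun q hq hT => ?_) (coverTour_visits hcov)
  · obtain ⟨h₁, h₂, h₃, h₄, -⟩ := of_mem_coverTour hI hq
    exact ⟨starG_adj.2 ⟨h₁.symm, Or.inl rfl⟩, h₂, by omega, h₄⟩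
  · exact (avail_comm S).1 ((of_mem_coverTour hI hq).2.2.2.2 (by omega))

end CoverImpliesCovering

end Stmt3

open Stmt3 in
theorem star_setCover_reduction_general (m n k : ℕ) (S : Fin n → Finset (Fin m)) :
    (∃ J, (𝒢 S k).IsCoveringFrom J ctr ∧
        arrival J 0 ≤ 2 * n + 2 * (∑ i, (S i).card) + 2 * k + 1) ↔
      ∃ I : Finset (Fin n), I.card ≤ k ∧ ∀ j : Fin m, ∃ i ∈ I, j ∈ S i := by
  rw [← start_last]
  exact ⟨fun ⟨J, hJ, _⟩ => exists_cover_of_isCoveringFrom hJ,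
    fun ⟨I, hI, hcov⟩ => exists_isCoveringFrom_of_cover hI hcov⟩

open Stmt3 in
/-- The star TVG built from a set-cover instance admits a journey from
the center at time `0` covering all vertices by time `D = 2n + 2·Σ|s_i| + 2k + 1` iff
the family contains a cover of `{1,…,m}` of size at most `k`. -/
theorem star_setCover_reduction (m n k : ℕ) (hk : 0 < k) (S : Fin n → Finset (Fin m)) :
    (∃ J, (𝒢 S k).IsCoveringFrom J ctr ∧
        arrival J 0 ≤ 2 * n + 2 * (∑ i, (S i).card) + 2 * k + 1) ↔
      ∃ I : Finset (Fin n), I.card ≤ k ∧ ∀ j : Fin m, ∃ i ∈ I, j ∈ S i :=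
  star_setCover_reduction_general m n k S
end

section
/- Let G be a graph on an even number n of vertices v_0,…,v_{n−1}, and construct G' by adding n new vertices c_0,…,c_{n−1} together with the edges (v_i,c_i), (v_i,c_{i+1}), and (c_i,c_{i+1}) for all i, indices taken mod n. Define a TVG 𝒢 with underlying graph G' and period p = 2 by assigning each edge one of three types: type 11 (available at all times) to every original edge of G; to (v_i,c_i), type 01 (available exactly at odd times) if i is even and type 10 (available exactly at even times) if i is odd; to (v_i,c_{i+1}), type 10 if i is even and type 01 if i is odd; and to (c_i,c_{i+1}), type 10 if i is even and type 01 if i is odd. Then there exists a journey starting at v_0 at time 0 that visits every vertex of G' and arrives by time 2n − 1 if and only if G has a Hamiltonian path starting at v_0. -/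
open TVG

namespace Stmt6

variable {n : ℕ} [NeZero n]

/-- Vertices of `G'`: the original vertices `v_0,…,v_{n-1}` (left) and the new vertices
`c_0,…,c_{n-1}` (right). -/
abbrev V' (n : ℕ) := Fin n ⊕ Fin n

/-- The base edge relation of `G'`: the edges of `G`, plus `(v_i,c_i)`, `(v_i,c_{i+1})`
and `(c_i,c_{i+1})` for all `i` (indices mod `n`). -/
def rel (G : SimpleGraph (Fin n)) : V' n → V' n → Prop
  | .inl i, .inl j => G.Adj i j
  | .inl i, .inr j => j = i ∨ j = i + 1
  | .inr i, .inr j => j = i + 1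
  | _, _ => False

/-- The graph `G'` built from `G`. -/
def G' (G : SimpleGraph (Fin n)) : SimpleGraph (V' n) := SimpleGraph.fromRel (rel G)

/-- The presence function (one direction): original edges have type `11` (always
available); `(v_i,c_i)` has type `01` (odd times) for even `i` and `10` (even times)
for odd `i`; `(v_i,c_{i+1})` and `(c_i,c_{i+1})` have type `10` for even `i` and `01`
for odd `i`. -/
def avail0 (G : SimpleGraph (Fin n)) : V' n → V' n → ℕ → Prop
  | .inl i, .inl j, _ => G.Adj i j
  | .inl i, .inr j, t =>
      (j = i ∧ (if Even i.val then Odd t else Even t)) ∨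
      (j = i + 1 ∧ (if Even i.val then Even t else Odd t))
  | .inr i, .inr j, t => j = i + 1 ∧ (if Even i.val then Even t else Odd t)
  | _, _, _ => False

/-- The TVG of the reduction (period `2`). -/
def 𝒢 (G : SimpleGraph (Fin n)) : TVG (V' n) :=
  ⟨G' G, fun u v t => avail0 G u v t ∨ avail0 G v u t⟩

end Stmt6

/-!
A journey from time `0` that covers all `2n` vertices of `G'` and arrives by time `2n - 1`
has no time to spare: it crosses an edge at every time `0, 1, …, 2n - 2` and never revisits a
vertex. By the choice of edge types, a step entering `c_m` at time `t` has `t ≢ m (mod 2)`, so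
the next step leaves `c_m` at a time `≡ m`, when neither edge from `c_m` back to `G` is
available: once in the cycle, the journey stays there. The cycle holds only `n` vertices, so the
first `n - 1` steps stay inside `G` and trace a Hamiltonian path from `v_0`.

Conversely, follow a Hamiltonian path `v_0 … v_j` (reaching `v_j` at the odd time `n - 1`),
step to whichever of `c_j`, `c_{j+1}` has even index, and go once around the cycle: the edge
`(c_i, c_{i+1})` is available exactly at the times of the parity of `i`.
-/

namespace TVG

variable {V : Type} {𝒢 : TVG V} {J : List (Step V)} {s : V}

def vertices (J : List (Step V)) (s : V) : List V := s :: J.map fun x => x.2.1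

@[simp]
lemma length_vertices : (vertices J s).length = J.length + 1 := by
  simp [vertices]

lemma visits_iff_mem_vertices {v : V} : visits J s v ↔ v ∈ vertices J s := by
  simp [visits, vertices, eq_comm]

lemma IsJourney.time_add_le (hJ : 𝒢.IsJourney J) {i d : ℕ} (h : i + d < J.length) :
    J[i].2.2 + d ≤ J[i + d].2.2 := by
  induction d with
  | zero => rfl
  | succ d ih =>
    have hlink : Linked J[i + d] J[i + d + 1] := List.isChain_iff_getElem.mp hJ.2 (i + d) h
    have := ih (by omega)
    exact (by omega : J[i].2.2 + (d + 1) ≤ J[i + d].2.2 + 1).trans hlink.2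

lemma IsJourney.time_eq_of_arrival_le (hJ : 𝒢.IsJourney J) (harr : arrival J 0 ≤ J.length)
    {i : ℕ} (hi : i < J.length) : J[i].2.2 = i := by
  have hlast : arrival J 0 = J[J.length - 1].2.2 + 1 := by
    simp [arrival, List.getLast?_eq_getElem?,
      List.getElem?_eq_getElem (by omega : J.length - 1 < J.length)]
  have hlow := hJ.time_add_le (i := 0) (d := i) (by omega)
  have hup := hJ.time_add_le (i := i) (d := J.length - 1 - i) (by omega)
  simp only [Nat.zero_add, Nat.add_sub_cancel' (by omega : i ≤ J.length - 1)] at hlow hup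
  omega

lemma IsJourney.length_le_arrival (hJ : 𝒢.IsJourney J) : J.length ≤ arrival J 0 := by
  rcases J.eq_nil_or_concat with rfl | ⟨L, x, rfl⟩
  · simp
  · have := hJ.time_add_le (i := 0) (d := L.length) (by simp)
    simp_all [arrival]
    omega

lemma IsCoveringFrom.toFinset_vertices [Fintype V] [DecidableEq V]
    (hJ : 𝒢.IsCoveringFrom J s) : (vertices J s).toFinset = Finset.univ :=
  Finset.eq_univ_of_forall fun v => List.mem_toFinset.mpr (visits_iff_mem_vertices.mp (hJ.2.2 v))

lemma IsCoveringFrom.card_le [Fintype V] (hJ : 𝒢.IsCoveringFrom J s) :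
    Fintype.card V ≤ J.length + 1 := by
  classical
  simpa [hJ.toFinset_vertices] using (vertices J s).toFinset_card_le

lemma IsCoveringFrom.nodup_vertices [Fintype V] (hJ : 𝒢.IsCoveringFrom J s)
    (hcard : J.length + 1 ≤ Fintype.card V) : (vertices J s).Nodup := by
  classical
  have hle := (vertices J s).toFinset_card_le
  refine Multiset.coe_nodup.mp (Multiset.toFinset_card_eq_card_iff_nodup.mp ?_)
  change (vertices J s).toFinset.card = (vertices J s).length
  rw [hJ.toFinset_vertices, Finset.card_univ, length_vertices] at *
  omega

lemma getD_vertices_succ {i : ℕ} (hi : i < J.length) :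
    (vertices J s).getD (i + 1) s = J[i].2.1 := by
  simp [vertices, hi]

lemma IsCoveringFrom.fst_eq_getD_vertices (hJ : 𝒢.IsCoveringFrom J s) {i : ℕ}
    (hi : i < J.length) : J[i].1 = (vertices J s).getD i s := by
  cases i with
  | zero => simpa [vertices] using hJ.2.1 J[0] (by simp [List.head?_eq_getElem?])
  | succ i =>
    rw [getD_vertices_succ (by omega)]
    exact (List.isChain_iff_getElem.mp hJ.1.2 i hi).1

theorem IsCoveringFrom.exists_tight [Fintype V] (hJ : 𝒢.IsCoveringFrom J s)
    (harr : arrival J 0 ≤ Fintype.card V - 1) :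
    ∃ p : ℕ → V, p 0 = s ∧ (∀ i < Fintype.card V - 1, 𝒢.avail (p i) (p (i + 1)) i) ∧
      Set.InjOn p (Set.Iio (Fintype.card V)) := by
  have hpos : 0 < Fintype.card V := Fintype.card_pos_iff.mpr ⟨s⟩
  have hlen : J.length + 1 = Fintype.card V := by
    have := hJ.1.length_le_arrival; have := hJ.card_le; omega
  have hnodup := hJ.nodup_vertices hlen.le
  have hvlen : (vertices J s).length = Fintype.card V := by simp [hlen]
  refine ⟨fun i => (vertices J s).getD i s, rfl, fun i hi => ?_, fun i hi j hj hij => ?_⟩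
  · have havail := (hJ.1.1 J[i] (List.getElem_mem (by omega))).2
    rwa [hJ.fst_eq_getD_vertices, ← getD_vertices_succ (s := s),
      hJ.1.time_eq_of_arrival_le (by omega)] at havail
  · simp only [Set.mem_Iio] at hi hj hij
    rw [List.getD_eq_getElem _ _ (by omega), List.getD_eq_getElem _ _ (by omega)] at hij
    exact (hnodup.getElem_inj_iff).mp hij

def ofSeq (p : ℕ → V) (L : ℕ) : List (Step V) := (List.range L).map fun i => (p i, p (i + 1), i)

lemma isCoveringFrom_ofSeq {p : ℕ → V} {L : ℕ}
    (hstep : ∀ i < L, 𝒢.G.Adj (p i) (p (i + 1)) ∧ 𝒢.avail (p i) (p (i + 1)) i)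
    (hcover : ∀ v, ∃ i ≤ L, p i = v) : 𝒢.IsCoveringFrom (ofSeq p L) (p 0) := by
  refine ⟨⟨?_, ?_⟩, ?_, fun v => ?_⟩
  · simpa [ofSeq] using hstep
  · exact (List.isChain_map _).2 ((List.isChain_range _ _).2 fun i _ => ⟨rfl, le_rfl⟩)
  · cases L <;> simp [ofSeq, startsAt, List.range_succ_eq_map]
  · obtain ⟨_ | i, hi, rfl⟩ := hcover v
    · exact Or.inl rfl
    · exact Or.inr ⟨_, List.mem_map.mpr ⟨i, List.mem_range.mpr hi, rfl⟩, rfl⟩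

lemma arrival_ofSeq (p : ℕ → V) (L : ℕ) : arrival (ofSeq p L) 0 = L := by
  cases L <;> simp [ofSeq, arrival, List.range_succ]

end TVG

namespace SimpleGraph

theorem exists_isHamiltonian_of_injOn {α : Type*} [Fintype α] [DecidableEq α]
    {G : SimpleGraph α} {n : ℕ} {f : ℕ → α} (hcard : Fintype.card α = n)
    (hf : Set.InjOn f (Set.Iio n))
    (hadj : ∀ i, i + 1 < n → G.Adj (f i) (f (i + 1))) :
    ∃ (w : α) (P : G.Walk (f 0) w), P.IsHamiltonian := by
  have hn : 0 < n := hcard ▸ Fintype.card_pos_iff.mpr ⟨f 0⟩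
  set l := (List.range n).map f
  have hne : l ≠ [] := by simp [l]; omega
  have hchain : l.IsChain G.Adj :=
    (List.isChain_map f).2 ((List.isChain_range _ n).2 fun i hi => hadj i (by omega))
  have hhead : l.head hne = f 0 := by simp [l, List.head_map, List.head_range]
  refine ⟨_, (Walk.ofSupport l hne hchain).copy hhead rfl, ?_⟩
  rw [Walk.isHamiltonian_iff_isPath_and_length_eq, Walk.isPath_def]
  have hsupp : ((Walk.ofSupport l hne hchain).copy hhead rfl).support = l := by simp
  constructor
  · rw [hsupp]
    exact List.Nodup.map_on (fun i hi j hj => hf (by simpa using hi) (by simpa using hj))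
      List.nodup_range
  · have := Walk.length_support ((Walk.ofSupport l hne hchain).copy hhead rfl)
    rw [hsupp, List.length_map, List.length_range] at this
    omega

end SimpleGraph

namespace Stmt6

lemma val_add_mod_two {n : ℕ} (hn : Even n) (a b : Fin n) :
    (a + b).val % 2 = (a.val + b.val) % 2 := by
  rw [Fin.val_add, Nat.mod_mod_of_dvd _ hn.two_dvd]

lemma ite_even_even_iff {a t : ℕ} : (if Even a then Even t else Odd t) ↔ t % 2 = a % 2 := by
  split_ifs <;> simp_all [Nat.even_iff, Nat.odd_iff]

lemma ite_even_odd_iff {a t : ℕ} : (if Even a then Odd t else Even t) ↔ t % 2 ≠ a % 2 := by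
  split_ifs <;> simp_all [Nat.even_iff, Nat.odd_iff]

variable {n : ℕ} [NeZero n] {G : SimpleGraph (Fin n)}

lemma val_add_one_mod_two (hn : Even n) (a : Fin n) : (a + 1).val % 2 = (a.val + 1) % 2 := by
  rw [val_add_mod_two hn, Fin.val_one', Nat.add_mod, Nat.mod_mod_of_dvd _ hn.two_dvd, ← Nat.add_mod]

lemma add_one_ne_self (hn : Even n) (a : Fin n) : a + 1 ≠ a := fun h => by
  have := val_add_one_mod_two hn a
  rw [h] at this
  omega

section Avail

variable {i j a m : Fin n} {t : ℕ}

lemma avail_comm {u v : V' n} : (𝒢 G).avail u v t ↔ (𝒢 G).avail v u t := Or.comm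

lemma avail_inl_inl : (𝒢 G).avail (.inl i) (.inl j) t ↔ G.Adj i j := by
  simp only [𝒢, avail0, G.adj_comm j, or_self]

lemma avail_inl_inr (hn : Even n) :
    (𝒢 G).avail (.inl i) (.inr m) t ↔ (m = i ∨ m = i + 1) ∧ t % 2 ≠ m.val % 2 := by
  simp only [𝒢, avail0, or_false, ite_even_even_iff, ite_even_odd_iff]
  constructor
  · rintro (⟨rfl, h⟩ | ⟨rfl, h⟩)
    · exact ⟨.inl rfl, h⟩
    · exact ⟨.inr rfl, by rw [val_add_one_mod_two hn]; omega⟩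
  · rintro ⟨rfl | rfl, h⟩
    · exact .inl ⟨rfl, h⟩
    · exact .inr ⟨rfl, by rw [val_add_one_mod_two hn] at h; omega⟩

lemma avail_inr_inr : (𝒢 G).avail (.inr a) (.inr m) t ↔
    (m = a + 1 ∧ t % 2 = a.val % 2) ∨ (a = m + 1 ∧ t % 2 = m.val % 2) := by
  simp only [𝒢, avail0, ite_even_even_iff]

lemma adj_of_avail (hn : Even n) {u v : V' n} (h : (𝒢 G).avail u v t) : (𝒢 G).G.Adj u v := by
  have hrel : ∀ {u v : V' n}, avail0 G u v t → u ≠ v ∧ rel G u v := by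
    rintro (i | i) (j | j) h
    · exact ⟨by simpa using G.ne_of_adj h, h⟩
    · exact ⟨Sum.inl_ne_inr, h.imp And.left And.left⟩
    · exact h.elim
    · exact ⟨by simpa using fun e => add_one_ne_self hn j (e ▸ h.1).symm, h.1⟩
  change (SimpleGraph.fromRel (rel G)).Adj u v
  rw [SimpleGraph.fromRel_adj]
  rcases h with h | h
  · exact ⟨(hrel h).1, .inl (hrel h).2⟩
  · exact ⟨(hrel h).1.symm, .inr (hrel h).2⟩

end Avail

section Forward

variable {p : ℕ → V' n} {L : ℕ}

lemma parity_of_step_into_cycle (hn : Even n) (hp0 : p 0 = .inl 0)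
    (hstep : ∀ i < L, (𝒢 G).avail (p i) (p (i + 1)) i) :
    ∀ i < L, ∀ m, p (i + 1) = .inr m → i % 2 ≠ m.val % 2 := by
  intro i
  induction i with
  | zero =>
    intro hi m hm
    have h := hstep 0 hi
    rw [hp0, hm, avail_inl_inr hn] at h
    exact h.2
  | succ i ih =>
    intro hi m hm
    have h := hstep (i + 1) hi
    rw [hm] at h
    rcases hpi : p (i + 1) with b | a
    · rw [hpi, avail_inl_inr hn] at h
      exact h.2
    · have ha := ih (by omega) a hpi
      rw [hpi, avail_inr_inr] at h
      rcases h with ⟨rfl, h⟩ | ⟨rfl, h⟩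
      · rw [val_add_one_mod_two hn]; omega
      · rw [val_add_one_mod_two hn] at ha; omega

lemma isRight_succ (hn : Even n) (hp0 : p 0 = .inl 0)
    (hstep : ∀ i < L, (𝒢 G).avail (p i) (p (i + 1)) i) {i : ℕ} (hi : i < L)
    (hright : (p i).isRight) : (p (i + 1)).isRight := by
  obtain ⟨a, ha⟩ := Sum.isRight_iff.mp hright
  obtain ⟨k, rfl⟩ : ∃ k, i = k + 1 :=
    Nat.exists_eq_succ_of_ne_zero (by rintro rfl; simp [hp0] at ha)
  have hk := parity_of_step_into_cycle hn hp0 hstep k (by omega) a ha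
  rcases hnext : p (k + 1 + 1) with b | b
  · have h := hstep (k + 1) hi
    rw [ha, hnext, avail_comm, avail_inl_inr hn] at h
    omega
  · rfl

lemma isRight_of_le (hn : Even n) (hp0 : p 0 = .inl 0)
    (hstep : ∀ i < L, (𝒢 G).avail (p i) (p (i + 1)) i) {i k : ℕ} (hik : i ≤ k) (hk : k ≤ L)
    (hright : (p i).isRight) : (p k).isRight := by
  induction k, hik using Nat.le_induction with
  | base => exact hright
  | succ k hik ih => exact isRight_succ hn hp0 hstep (by omega) (ih (by omega))

lemma isLeft_of_lt (hn : Even n) (hp0 : p 0 = .inl 0)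
    (hstep : ∀ i < 2 * n - 1, (𝒢 G).avail (p i) (p (i + 1)) i)
    (hinj : Set.InjOn p (Set.Iio (2 * n))) {i : ℕ} (hi : i < n) : (p i).isLeft := by
  by_contra hleft
  have hright : (p i).isRight := by simpa using hleft
  have hmaps : ∀ k ∈ Finset.Icc i (2 * n - 1), p k ∈ Finset.univ.map .inr := fun k hk => by
    obtain ⟨b, hb⟩ := Sum.isRight_iff.mp
      (isRight_of_le hn hp0 hstep (Finset.mem_Icc.mp hk).1 (Finset.mem_Icc.mp hk).2 hright)
    simp [hb]
  have := Finset.card_le_card_of_injOn p hmaps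
    (hinj.mono fun k hk => by simp at hk ⊢; omega)
  simp at this
  omega

theorem exists_isHamiltonian_of_tight (hn : Even n) (hp0 : p 0 = .inl 0)
    (hstep : ∀ i < 2 * n - 1, (𝒢 G).avail (p i) (p (i + 1)) i)
    (hinj : Set.InjOn p (Set.Iio (2 * n))) :
    ∃ (w : Fin n) (P : G.Walk 0 w), P.IsHamiltonian := by
  set f : ℕ → Fin n := fun i => (p i).elim id fun _ => 0
  have hf : ∀ i < n, p i = .inl (f i) := fun i hi => by
    obtain ⟨b, hb⟩ := Sum.isLeft_iff.mp (isLeft_of_lt hn hp0 hstep hinj hi)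
    simp [f, hb]
  have hf0 : f 0 = 0 := by simp [f, hp0]
  have hfinj : Set.InjOn f (Set.Iio n) := fun i hi j hj hij =>
    hinj (by simp at hi ⊢; omega) (by simp at hj ⊢; omega) (by rw [hf i hi, hf j hj, hij])
  have hadj : ∀ i, i + 1 < n → G.Adj (f i) (f (i + 1)) := fun i hi => by
    have h := hstep i (by omega)
    rwa [hf i (by omega), hf (i + 1) hi, avail_inl_inl] at h
  exact hf0 ▸ SimpleGraph.exists_isHamiltonian_of_injOn (Fintype.card_fin n) hfinj hadj

end Forward

section Backward

open Fin.NatCast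

variable {w : Fin n}

def pathThenCycle (P : G.Walk 0 w) (m : Fin n) (i : ℕ) : V' n :=
  if i < n then .inl (P.getVert i) else .inr (m + (i - n : ℕ))

lemma avail_pathThenCycle (hn : Even n) {P : G.Walk 0 w} (hP : P.length = n - 1) {m : Fin n}
    (hmw : m = w ∨ m = w + 1) (hm : m.val % 2 = 0) :
    ∀ i < 2 * n - 1,
      (𝒢 G).avail (pathThenCycle P m i) (pathThenCycle P m (i + 1)) i := by
  have hn2 := Nat.even_iff.mp hn
  intro i hi
  rcases lt_trichotomy (i + 1) n with h | h | h
  · simp only [pathThenCycle, if_pos h, if_pos (by omega : i < n), avail_inl_inl]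
    exact P.adj_getVert_succ (by omega)
  · have hw : P.getVert i = w := by rw [show i = P.length by omega, P.getVert_length]
    simp only [pathThenCycle, if_pos (by omega : i < n), lt_irrefl, if_false, h,
      Nat.sub_self, Nat.cast_zero, add_zero, hw, avail_inl_inr hn]
    exact ⟨hmw, by omega⟩
  · obtain ⟨k, rfl⟩ : ∃ k, i = n + k := ⟨i - n, by omega⟩
    simp only [pathThenCycle, if_neg (by omega : ¬ n + k < n), if_neg (by omega : ¬ n + k + 1 < n),
      show n + k + 1 - n = k + 1 by omega, Nat.add_sub_cancel_left, Nat.cast_succ, ← add_assoc,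
      avail_inr_inr, true_and]
    left
    rw [val_add_mod_two hn, Fin.val_natCast]
    have := Nat.mod_mod_of_dvd k hn.two_dvd
    omega

lemma exists_pathThenCycle_eq (P : G.Walk 0 w) (hP : P.IsHamiltonian) (m : Fin n)
    (v : V' n) : ∃ i ≤ 2 * n - 1, pathThenCycle P m i = v := by
  have hlen : P.length = n - 1 := by simpa using hP.length_eq
  have hpos := Nat.pos_of_neZero n
  rcases v with q | q
  · obtain ⟨i, rfl, hi⟩ := SimpleGraph.Walk.mem_support_iff_exists_getVert.mp (hP.mem_support q)
    exact ⟨i, by omega, by simp [pathThenCycle, show i < n by omega]⟩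
  · refine ⟨n + (q - m).val, by omega, ?_⟩
    simp [pathThenCycle]

lemma exists_even_eq_or_eq_add_one (hn : Even n) (w : Fin n) :
    ∃ m : Fin n, (m = w ∨ m = w + 1) ∧ m.val % 2 = 0 := by
  rcases Nat.mod_two_eq_zero_or_one w.val with h | h
  · exact ⟨w, .inl rfl, h⟩
  · exact ⟨w + 1, .inr rfl, by rw [val_add_one_mod_two hn]; omega⟩

theorem exists_covering_of_isHamiltonian (hn : Even n) (P : G.Walk 0 w) (hP : P.IsHamiltonian) :
    ∃ J, (𝒢 G).IsCoveringFrom J (.inl 0) ∧ arrival J 0 ≤ 2 * n - 1 := by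
  obtain ⟨m, hmw, hm⟩ := exists_even_eq_or_eq_add_one hn w
  have hstep := avail_pathThenCycle hn (by simpa using hP.length_eq) hmw hm
  have h0 : pathThenCycle P m 0 = .inl 0 := by simp [pathThenCycle, Nat.pos_of_neZero]
  refine ⟨ofSeq (pathThenCycle P m) (2 * n - 1), ?_, (arrival_ofSeq _ _).le⟩
  exact h0 ▸ isCoveringFrom_ofSeq (fun i hi => ⟨adj_of_avail hn (hstep i hi), hstep i hi⟩)
    (exists_pathThenCycle_eq P hP m)

end Backward

end Stmt6

open Stmt6 in
/-- For `G` on an even number `n` of vertices, the period-`2` TVG on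
`G'` admits a journey from `v_0` at time `0` covering all vertices by time `2n - 1` iff
`G` has a Hamiltonian path starting at `v_0`. -/
theorem period_two_hamPath_reduction (n : ℕ) [NeZero n] (hn : Even n)
    (G : SimpleGraph (Fin n)) :
    (∃ J, (𝒢 G).IsCoveringFrom J (Sum.inl 0) ∧ arrival J 0 ≤ 2 * n - 1) ↔
      ∃ (w : Fin n) (P : G.Walk 0 w), P.IsHamiltonian := by
  have hcard : Fintype.card (V' n) = 2 * n := by simp [two_mul]
  constructor
  · rintro ⟨J, hJ, harr⟩
    obtain ⟨p, hp0, hstep, hinj⟩ := hJ.exists_tight (hcard ▸ harr)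
    rw [hcard] at hstep hinj
    exact exists_isHamiltonian_of_tight hn hp0 hstep hinj
  · rintro ⟨w, P, hP⟩
    exact exists_covering_of_isHamiltonian hn P hP
end

section
/- Let 𝒢 be a TVG in class R whose underlying graph is the cycle v_0 v_1 … v_n v_0, with an agent starting at v_0 at time 0. Then there exists an edge e of the cycle and an optimal solution to DMVP whose underlying walk never traverses e; consequently, the minimal DMVP arrival time on the cycle equals the minimum, over edges e of the cycle, of the minimal DMVP arrival time over the TVG obtained by restricting 𝒢 to the path resulting from deleting e. -/
open TVG

/-- Minimal arrival time of a covering journey from `s` at time `0`. -/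
noncomputable def coverTime {V : Type} (𝒢 : TVG V) (s : V) : ℕ :=
  sInf {t | ∃ J, 𝒢.IsCoveringFrom J s ∧ arrival J 0 = t}

/-- The TVG obtained by deleting the edge `e` (restricting both the underlying graph
and the presence function). -/
def TVG.restrict {V : Type} (𝒢 : TVG V) (e : Sym2 V) : TVG V :=
  ⟨𝒢.G.deleteEdges {e}, fun u v t => 𝒢.avail u v t ∧ s(u, v) ≠ e⟩

/-!
An optimal covering journey first reaches its final vertex `w` at its last step, for otherwise
dropping that step would give an earlier covering journey. So it never leaves `w`, and it never
crosses the edge joining `w` to its other neighbour on the cycle: it is also an optimal covering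
journey of the path obtained by deleting that edge. Conversely, every path obtained by deleting
an edge of the cycle is connected, hence in class `R` it has covering journeys, and these are
covering journeys of the cycle, so no path does better than the cycle.
-/

namespace SimpleGraph

theorem Connected.exists_walk_forall_mem_support {V : Type*} [Finite V] {G : SimpleGraph V}
    (hG : G.Connected) (s : V) :
    ∃ v, ∃ p : G.Walk s v, ∀ w, w ∈ p.support := by
  classical
  have := Fintype.ofFinite V
  suffices ∀ S : Finset V, ∃ v, ∃ p : G.Walk s v, ∀ w ∈ S, w ∈ p.support by
    simpa using this Finset.univ
  intro S
  induction S using Finset.induction_on with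
  | empty => exact ⟨s, .nil, by simp⟩
  | insert x S _ ih =>
    obtain ⟨v, p, hp⟩ := ih
    refine ⟨x, p.append (hG v x).some, fun w hw => ?_⟩
    rw [Walk.mem_support_append_iff]
    rcases Finset.mem_insert.mp hw with rfl | hw
    · exact Or.inr (Walk.end_mem_support _)
    · exact Or.inl (hp w hw)

section cycleGraph

open Fin.CommRing

variable {n : ℕ}

theorem cycleGraph_exists_adj_ne (hn : 2 ≤ n) (w u : Fin (n + 1)) :
    ∃ b, (cycleGraph (n + 1)).Adj w b ∧ b ≠ u := by
  obtain ⟨k, rfl⟩ := Nat.exists_eq_add_of_le' hn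
  have hdeg : (cycleGraph (k + 3)).degree w = 2 := cycleGraph_degree_three_le
  obtain ⟨b, hb, hbu⟩ := Finset.exists_mem_ne (s := (cycleGraph (k + 3)).neighborFinset w)
    (by rw [card_neighborFinset_eq_degree, hdeg]; norm_num) u
  exact ⟨b, (mem_neighborFinset _ _ _).mp hb, hbu⟩

theorem exists_eq_of_mem_edgeSet_cycleGraph {e : Sym2 (Fin (n + 1))}
    (he : e ∈ (cycleGraph (n + 1)).edgeSet) : ∃ a, e = s(a, a + 1) := by
  induction e with
  | h u v =>
    rw [mem_edgeSet] at he
    cases n with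
    | zero => exact absurd he cycleGraph_one_adj
    | succ k =>
      rcases cycleGraph_adj.mp he with h | h
      · exact ⟨v, by rw [← h, add_sub_cancel, Sym2.eq_swap]⟩
      · exact ⟨u, by rw [← h, add_sub_cancel]⟩

theorem cycleGraph_deleteEdges_adj (hn : 2 ≤ n) (a : Fin (n + 1)) {i j : Fin (n + 1)}
    (hij : i.val + 1 = j.val) :
    ((cycleGraph (n + 1)).deleteEdges {s(a, a + 1)}).Adj (a + 1 + i) (a + 1 + j) := by
  obtain ⟨k, rfl⟩ := Nat.exists_eq_add_of_le' hn
  have hj : j = i + 1 := by ext; rw [Fin.val_add_one_of_lt (by grind)]; omega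
  subst hj
  refine (deleteEdges_adj).mpr ⟨(cycleGraph_adj (n := k + 1)).mpr (Or.inr (by ring)), ?_⟩
  rw [Set.mem_singleton_iff, Sym2.eq_iff]
  rintro (⟨-, h⟩ | ⟨h₁, h₂⟩)
  · have : i + 1 = 0 := by linear_combination h
    rw [this] at hij
    simp at hij
  · have hi : i = 0 := by linear_combination h₁
    subst hi
    have : ((2 : ℕ) : Fin (k + 3)) = 0 := by push_cast; linear_combination h₂
    have := Nat.le_of_dvd two_pos (Fin.natCast_eq_zero.mp this)
    omega

theorem cycleGraph_deleteEdges_connected (hn : 2 ≤ n) {e : Sym2 (Fin (n + 1))}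
    (he : e ∈ (cycleGraph (n + 1)).edgeSet) :
    ((cycleGraph (n + 1)).deleteEdges {e}).Connected := by
  obtain ⟨a, rfl⟩ := exists_eq_of_mem_edgeSet_cycleGraph he
  let f : pathGraph (n + 1) →g (cycleGraph (n + 1)).deleteEdges {s(a, a + 1)} :=
    ⟨fun i => a + 1 + i, fun {i j} h => by
      rcases pathGraph_adj.mp h with h | h
      · exact cycleGraph_deleteEdges_adj hn a h
      · exact (cycleGraph_deleteEdges_adj hn a h).symm⟩
  exact (pathGraph_connected n).map f fun v => ⟨v - (a + 1), add_sub_cancel _ _⟩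

end cycleGraph

end SimpleGraph

namespace TVG

variable {V : Type} {𝒢 : TVG V} {J K : List (Step V)} {x : Step V} {s : V} {e : Sym2 V}

theorem exists_isJourney_of_walk (hrec : ∀ u v, 𝒢.G.Adj u v → ∀ t, ∃ t', t < t' ∧ 𝒢.avail u v t')
    {u v : V} (p : 𝒢.G.Walk u v) (t : ℕ) :
    ∃ J, 𝒢.IsJourney J ∧ startsAt J u ∧ departsAfter J t ∧ ∀ w ∈ p.support, visits J u w := by
  induction p generalizing t with
  | nil => exact ⟨[], ⟨by simp, .nil⟩, by simp [startsAt], by simp [departsAfter], by simp [visits]⟩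
  | @cons u v w hadj q ih =>
    obtain ⟨t', htt', hav⟩ := hrec u v hadj t
    obtain ⟨J, ⟨hstep, hchain⟩, hstart, hdep, hvis⟩ := ih (t' + 1)
    have hlinked : ∀ y ∈ J.head?, Linked (u, v, t') y := fun y hy => ⟨hstart y hy, hdep y hy⟩
    refine ⟨(u, v, t') :: J, ⟨?_, List.isChain_cons.mpr ⟨hlinked, hchain⟩⟩,
      by simp [startsAt], by simp [departsAfter, htt'.le], ?_⟩
    · simpa [hadj, hav] using hstep
    · intro x hx
      rw [SimpleGraph.Walk.support_cons, List.mem_cons] at hx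
      rcases hx with rfl | hx
      · exact Or.inl rfl
      · rcases hvis x hx with rfl | ⟨y, hy, rfl⟩
        · exact Or.inr ⟨_, List.mem_cons_self, rfl⟩
        · exact Or.inr ⟨y, List.mem_cons_of_mem _ hy, rfl⟩

theorem ClassR.exists_isCoveringFrom [Finite V] (h𝒢 : 𝒢.ClassR) (s : V) :
    ∃ J, 𝒢.IsCoveringFrom J s := by
  obtain ⟨v, p, hp⟩ := h𝒢.1.exists_walk_forall_mem_support s
  obtain ⟨J, hJ, hstart, -, hvis⟩ := exists_isJourney_of_walk h𝒢.2 p 0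
  exact ⟨J, hJ, hstart, fun w => hvis w (hp w)⟩

theorem ClassR.restrict (h𝒢 : 𝒢.ClassR) (hconn : (𝒢.G.deleteEdges {e}).Connected) :
    (𝒢.restrict e).ClassR := by
  refine ⟨hconn, fun u v huv t => ?_⟩
  obtain ⟨hadj, hne⟩ := SimpleGraph.deleteEdges_adj.mp huv
  obtain ⟨t', htt', hav⟩ := h𝒢.2 u v hadj t
  exact ⟨t', htt', hav, hne⟩

theorem IsCoveringFrom.of_restrict
    (hJ : (𝒢.restrict e).IsCoveringFrom J s) : 𝒢.IsCoveringFrom J s :=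
  ⟨⟨fun x hx => ⟨(SimpleGraph.deleteEdges_adj.mp (hJ.1.1 x hx).1).1, (hJ.1.1 x hx).2.1⟩, hJ.1.2⟩,
    hJ.2⟩

theorem IsCoveringFrom.restrict (hJ : 𝒢.IsCoveringFrom J s) (he : ∀ x ∈ J, s(x.1, x.2.1) ≠ e) :
    (𝒢.restrict e).IsCoveringFrom J s :=
  ⟨⟨fun x hx => ⟨SimpleGraph.deleteEdges_adj.mpr ⟨(hJ.1.1 x hx).1, he x hx⟩,
    (hJ.1.1 x hx).2, he x hx⟩, hJ.1.2⟩, hJ.2⟩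

/-- An optimal solution to DMVP from `s`. -/
def IsOptimalCoveringFrom (𝒢 : TVG V) (J : List (Step V)) (s : V) : Prop :=
  𝒢.IsCoveringFrom J s ∧ ∀ J', 𝒢.IsCoveringFrom J' s → arrival J 0 ≤ arrival J' 0

theorem coverTime_le (hJ : 𝒢.IsCoveringFrom J s) : coverTime 𝒢 s ≤ arrival J 0 :=
  Nat.sInf_le ⟨J, hJ, rfl⟩

theorem exists_arrival_eq_coverTime (h : ∃ J, 𝒢.IsCoveringFrom J s) :
    ∃ J, 𝒢.IsCoveringFrom J s ∧ arrival J 0 = coverTime 𝒢 s :=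
  Nat.sInf_mem (s := {t | ∃ J, 𝒢.IsCoveringFrom J s ∧ arrival J 0 = t})
    (h.elim fun J hJ => ⟨_, J, hJ, rfl⟩)

theorem exists_isOptimalCoveringFrom (h : ∃ J, 𝒢.IsCoveringFrom J s) :
    ∃ J, 𝒢.IsOptimalCoveringFrom J s := by
  obtain ⟨J, hJ, harr⟩ := exists_arrival_eq_coverTime h
  exact ⟨J, hJ, fun J' hJ' => harr ▸ coverTime_le hJ'⟩

theorem IsOptimalCoveringFrom.arrival_eq_coverTime
    (hJ : 𝒢.IsOptimalCoveringFrom J s) : arrival J 0 = coverTime 𝒢 s := by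
  obtain ⟨J', hJ', harr⟩ := exists_arrival_eq_coverTime ⟨J, hJ.1⟩
  exact le_antisymm (harr ▸ hJ.2 J' hJ') (coverTime_le hJ.1)

theorem coverTime_le_coverTime_restrict
    (h : ∃ J, (𝒢.restrict e).IsCoveringFrom J s) : coverTime 𝒢 s ≤ coverTime (𝒢.restrict e) s := by
  obtain ⟨J, hJ, harr⟩ := exists_arrival_eq_coverTime h
  exact harr ▸ coverTime_le hJ.of_restrict

theorem IsOptimalCoveringFrom.coverTime_restrict
    (hJ : 𝒢.IsOptimalCoveringFrom J s) (he : ∀ x ∈ J, s(x.1, x.2.1) ≠ e) :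
    coverTime (𝒢.restrict e) s = coverTime 𝒢 s :=
  le_antisymm (hJ.arrival_eq_coverTime ▸ coverTime_le (hJ.1.restrict he))
    (coverTime_le_coverTime_restrict ⟨J, hJ.1.restrict he⟩)

theorem visits_dropLast_fst (hJ : J.IsChain Linked)
    (hs : startsAt J s) : ∀ y ∈ J, visits J.dropLast s y.1 := by
  induction J generalizing s with
  | nil => simp
  | cons a J ih =>
    intro y hy
    rcases List.mem_cons.mp hy with rfl | hy
    · exact Or.inl (hs y rfl)
    obtain ⟨hlink, hJ⟩ := List.isChain_cons.mp hJ
    have hdrop : (a :: J).dropLast = a :: J.dropLast :=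
      List.dropLast_cons_of_ne_nil (List.ne_nil_of_mem hy)
    rw [hdrop]
    rcases ih hJ (fun b hb => (hlink b hb).1) y hy with h | ⟨z, hz, h⟩
    · exact Or.inr ⟨a, List.mem_cons_self, h.symm⟩
    · exact Or.inr ⟨z, List.mem_cons_of_mem _ hz, h⟩

theorem IsCoveringFrom.of_append_singleton
    (hJ : 𝒢.IsCoveringFrom (K ++ [x]) s) (hx : visits K s x.2.1) : 𝒢.IsCoveringFrom K s := by
  obtain ⟨⟨hstep, hchain⟩, hstart, hvis⟩ := hJ
  refine ⟨⟨fun y hy => hstep y (List.mem_append_left _ hy), hchain.left_of_append⟩,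
    fun y hy => hstart y (by simp [Option.mem_def.mp hy]), fun v => ?_⟩
  rcases hvis v with h | ⟨y, hy, rfl⟩
  · exact Or.inl h
  rcases List.mem_append.mp hy with hy | hy
  · exact Or.inr ⟨y, hy, rfl⟩
  · rwa [List.mem_singleton.mp hy]

theorem arrival_lt_arrival_append_singleton
    (h : (K ++ [x]).IsChain Linked) : arrival K 0 < arrival (K ++ [x]) 0 := by
  have hlink := (List.isChain_append.mp h).2.2
  unfold arrival
  rw [List.getLast?_concat]
  cases hK : K.getLast? with
  | none => simp
  | some y => simpa using (hlink y hK x rfl).2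

theorem IsOptimalCoveringFrom.not_visits_last
    (hJ : 𝒢.IsOptimalCoveringFrom (K ++ [x]) s) : ¬ visits K s x.2.1 := fun hx =>
  (hJ.2 K (hJ.1.of_append_singleton hx)).not_gt (arrival_lt_arrival_append_singleton hJ.1.1.2)

theorem IsOptimalCoveringFrom.forall_edge_ne {b : V}
    (hJ : 𝒢.IsOptimalCoveringFrom (K ++ [x]) s) (hb : b ≠ x.1) :
    ∀ y ∈ K ++ [x], s(y.1, y.2.1) ≠ s(x.2.1, b) := by
  intro y hy hyx
  rcases Sym2.eq_iff.mp hyx with ⟨hsrc, -⟩ | ⟨hsrc, htgt⟩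
  · have := visits_dropLast_fst hJ.1.1.2 hJ.1.2.1 y hy
    rw [List.dropLast_concat, hsrc] at this
    exact hJ.not_visits_last this
  · rcases List.mem_append.mp hy with hy | hy
    · exact hJ.not_visits_last (Or.inr ⟨y, hy, htgt⟩)
    · exact hb (List.mem_singleton.mp hy ▸ hsrc).symm

end TVG

/-- For a TVG of class `R` whose underlying graph is the cycle
`v_0 v_1 … v_n v_0`, with the agent starting at `v_0` at time `0`: some edge `e` of the
cycle admits an optimal solution never traversing `e`; consequently the minimal DMVP
arrival time equals the minimum over edges `e` of the minimal arrival time over the TVG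
restricted to the path obtained by deleting `e`. -/
theorem dmvp_cycle_reduces_to_paths (n : ℕ) (hn : 2 ≤ n) (𝒢 : TVG (Fin (n + 1)))
    (hG : 𝒢.G = SimpleGraph.cycleGraph (n + 1)) (hR : 𝒢.ClassR) :
    (∃ e ∈ 𝒢.G.edgeSet, ∃ J, 𝒢.IsCoveringFrom J 0 ∧
      (∀ J', 𝒢.IsCoveringFrom J' 0 → arrival J 0 ≤ arrival J' 0) ∧
      ∀ x ∈ J, s(x.1, x.2.1) ≠ e) ∧
    coverTime 𝒢 0 = sInf {t | ∃ e ∈ 𝒢.G.edgeSet, t = coverTime (𝒢.restrict e) 0} := by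
  have hpaths : ∀ e ∈ 𝒢.G.edgeSet, (𝒢.restrict e).ClassR := fun e he =>
    hR.restrict (hG ▸ SimpleGraph.cycleGraph_deleteEdges_connected hn (hG ▸ he))
  obtain ⟨J, hJ⟩ := exists_isOptimalCoveringFrom (hR.exists_isCoveringFrom 0)
  obtain ⟨K, x, rfl⟩ : ∃ K x, J = K ++ [x] := by
    rcases J.eq_nil_or_concat' with rfl | h
    · have := hJ.1.2.2 (Fin.last n)
      simp [visits] at this
      omega
    · exact h
  obtain ⟨b, hb, hbx⟩ := SimpleGraph.cycleGraph_exists_adj_ne hn x.2.1 x.1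
  have he : s(x.2.1, b) ∈ 𝒢.G.edgeSet := hG ▸ hb
  have havoid := hJ.forall_edge_ne hbx
  refine ⟨⟨_, he, _, hJ.1, hJ.2, havoid⟩, le_antisymm ?_ ?_⟩
  · exact le_csInf ⟨_, _, he, rfl⟩ fun t ⟨e, he, ht⟩ =>
      ht ▸ coverTime_le_coverTime_restrict ((hpaths e he).exists_isCoveringFrom 0)
  · exact Nat.sInf_le ⟨_, he, (hJ.coverTime_restrict havoid).symm⟩
end

section
/- Let 𝒢 be a TVG in class P with period p, let u, v be vertices, and let d be the minimal temporal length of a journey from u to v over all departure times (the fastest cost from u to v). Then for every time t there exists a journey from u to v departing at or after t and arriving by time t + d + (p − 1). -/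
open TVG

/-! A fastest journey from `u` to `v` can be translated in time by any multiple of `p` without
losing the availability of its edges, and some translate departs in `[t, t + p)`; it
arrives `d` time units later. -/

theorem Nat.exists_modEq_mem_Ico {p : ℕ} (hp : 0 < p) (a t : ℕ) :
    ∃ b, a ≡ b [MOD p] ∧ t ≤ b ∧ b < t + p := by
  refine ⟨t + (a + (p - 1) * t) % p, ?_, Nat.le_add_right _ _,
    Nat.add_lt_add_left (Nat.mod_lt _ hp) t⟩
  have hsum : t + (a + (p - 1) * t) = a + p * t := by
    obtain ⟨q, rfl⟩ := Nat.exists_eq_add_of_lt hp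
    simp only [Nat.zero_add, Nat.add_sub_cancel]
    ring
  rw [Nat.ModEq, Nat.add_mod_mod, hsum, Nat.add_mul_mod_self_left]

namespace TVG

variable {V : Type}

theorem ClassP.avail_add_mul {𝒢 : TVG V} {p : ℕ} (hP : 𝒢.ClassP p) (x y : V) (s k : ℕ) :
    𝒢.avail x y (s + p * k) ↔ 𝒢.avail x y s := by
  induction k with
  | zero => rfl
  | succ k ih => rw [Nat.mul_succ, ← Nat.add_assoc, ← hP.2, ih]

theorem ClassP.avail_iff_mod {𝒢 : TVG V} {p : ℕ} (hP : 𝒢.ClassP p) (x y : V) (s : ℕ) :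
    𝒢.avail x y s ↔ 𝒢.avail x y (s % p) := by
  conv_lhs => rw [← Nat.mod_add_div s p]
  exact hP.avail_add_mul x y _ _

theorem ClassP.avail_iff_of_modEq {𝒢 : TVG V} {p : ℕ} (hP : 𝒢.ClassP p) (x y : V) {s s' : ℕ}
    (h : s ≡ s' [MOD p]) : 𝒢.avail x y s ↔ 𝒢.avail x y s' := by
  rw [hP.avail_iff_mod, h, ← hP.avail_iff_mod]

theorem Linked.head_le {a : Step V} {l : List (Step V)} (h : (a :: l).IsChain Linked) :
    ∀ x ∈ a :: l, a.2.2 ≤ x.2.2 := by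
  have hlt : ((a :: l).map (·.2.2)).Pairwise (· < ·) :=
    ((List.isChain_map _).2 (h.imp fun _ _ hxy => hxy.2)).pairwise
  simp only [List.map_cons, List.pairwise_cons, List.mem_map] at hlt
  rintro x (_ | ⟨_, hx⟩)
  · exact le_rfl
  · exact (hlt.1 _ ⟨x, hx, rfl⟩).le

/-- Moves a step so that time `a` becomes time `b`; meant for steps at times `≥ a`, since the
subtraction is truncated. -/
def shiftStep (a b : ℕ) (x : Step V) : Step V := (x.1, x.2.1, x.2.2 - a + b)

theorem IsJourney.map_shiftStep {𝒢 : TVG V} {p : ℕ} (hP : 𝒢.ClassP p) {J : List (Step V)}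
    (hJ : 𝒢.IsJourney J) {a b : ℕ} (ha : ∀ x ∈ J, a ≤ x.2.2) (hab : a ≡ b [MOD p]) :
    𝒢.IsJourney (J.map (shiftStep a b)) := by
  refine ⟨?_, (List.isChain_map _).2 <| hJ.2.imp_of_mem_imp
    fun x y hx _ ⟨hvert, htime⟩ => ?_⟩
  · simp only [List.mem_map]
    rintro _ ⟨x, hx, rfl⟩
    refine ⟨(hJ.1 x hx).1, (hP.avail_iff_of_modEq _ _ ?_).1 (hJ.1 x hx).2⟩
    have hshift := (Nat.ModEq.refl (x.2.2 - a)).add hab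
    rwa [Nat.sub_add_cancel (ha x hx)] at hshift
  · have hxa := ha x hx
    exact ⟨hvert, by simp only [shiftStep]; omega⟩

theorem arrival_map_shiftStep {a : Step V} {l : List (Step V)} (h : (a :: l).IsChain Linked)
    (b s s' : ℕ) :
    arrival ((a :: l).map (shiftStep a.2.2 b)) s = arrival (a :: l) s' - a.2.2 + b := by
  have hne : a :: l ≠ [] := List.cons_ne_nil a l
  have hle := Linked.head_le h _ (List.getLast_mem hne)
  rw [arrival, arrival, List.getLast?_map, List.getLast?_eq_some_getLast hne]
  simp only [Option.map_some, Option.elim_some, shiftStep]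
  omega

end TVG

/-- In a TVG of class `P` with period `p`, if `d` is the minimal
temporal length of a journey from `u` to `v` over all departure times (the fastest
cost), then for every time `t` there is a journey from `u` to `v` departing at or after
`t` and arriving by time `t + d + (p - 1)`. -/
theorem classP_foremost_le_fastest_add_period {V : Type} (𝒢 : TVG V) (p : ℕ)
    (hp : 0 < p) (hP : 𝒢.ClassP p) (u v : V) (d : ℕ)
    (hd : IsLeast {δ : ℕ | ∃ J, 𝒢.IsJourney J ∧ startsAt J u ∧ endAt J u = v ∧
        arrival J (departure J 0) - departure J 0 = δ} d) :
    ∀ t : ℕ, ∃ J, 𝒢.IsJourney J ∧ startsAt J u ∧ endAt J u = v ∧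
      departsAfter J t ∧ arrival J t ≤ t + d + (p - 1) := by
  intro t
  obtain ⟨J, hJ, hu, hv, hlen⟩ := hd.1
  rcases J with _ | ⟨a, l⟩
  · exact ⟨[], hJ, hu, hv, by simp [departsAfter], by simp [arrival, Nat.add_assoc]⟩
  have hla := Linked.head_le hJ.2
  obtain ⟨b, hab, htb, hbt⟩ := Nat.exists_modEq_mem_Ico hp a.2.2 t
  refine ⟨(a :: l).map (shiftStep a.2.2 b), hJ.map_shiftStep hP hla hab, ?_, ?_, ?_, ?_⟩
  · simpa [startsAt, shiftStep] using hu
  · rw [endAt, List.getLast?_map, Option.elim_map]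
    exact hv
  · simp [departsAfter, shiftStep, htb]
  · simp only [departure, List.head?_cons, Option.elim_some] at hlen
    rw [arrival_map_shiftStep hJ.2 b t a.2.2]
    omega
end
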